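/- arXiv:1208.0445 — 6 statements merged into one kernel-verified Lean document; each statement's English description precedes it below -/
import Mathlib

section
/- Let β be a real number with 0 < β < β_h − d_f/2, and assume that ∑_{n≥0} α^{−2nβ} ∑_{k=1}^{N^{n+1}} (ξ^{(n+1)}_k)² < ∞. Then the series ∑_{n≥0} sup_{z∈Z} |S^{(n+1)}(z) − S^{(n)}(z)| converges; consequently the functions S^{(n)} converge uniformly on Z to a continuous function η : Z → ℝ. -/
/-!
Since the cells are nested and `ξ` is additive under refinement, `S⁽ⁿ⁾` can be rewritten over
level `n + 1`, each child carrying the value of `h` at its parent's point: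
`S⁽ⁿ⁺¹⁾ - S⁽ⁿ⁾ = ∑ₖ (h(z, y⁽ⁿ⁺¹⁾ₖ) - h(z, y⁽ⁿ⁾_{c k})) ξ⁽ⁿ⁺¹⁾ₖ`. Both points lie in a cell of
diameter `α⁻ⁿ`, so Hölder continuity and Cauchy–Schwarz bound this uniformly in `z` by
`K_h α^{-nβ_h} √(Nⁿ⁺¹ ∑ₖ (ξ⁽ⁿ⁺¹⁾ₖ)²) = K_h √N √(rⁿ aₙ)`, where `r = N α^{2β - 2β_h} < 1` and `aₙ`
are the summable terms of the hypothesis; `√(rⁿ aₙ) ≤ rⁿ + aₙ` is summable. A sequence of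
continuous functions whose consecutive uniform distances are summable converges uniformly to a
continuous limit.
-/

open Finset Filter Topology

lemma dist_le_of_mem_of_ediam_le {X : Type*} [PseudoMetricSpace X] {s : Set X} {x y : X} {δ : ℝ}
    (hδ : 0 ≤ δ) (hs : Metric.ediam s ≤ ENNReal.ofReal δ) (hx : x ∈ s) (hy : y ∈ s) :
    dist x y ≤ δ :=
  (edist_le_ofReal hδ).1 ((Metric.edist_le_ediam_of_mem hx hy).trans hs)

lemma sum_mul_eq_sum_comp_mul_of_eq_sum_fiber {R ι κ : Type*} [CommSemiring R] [Fintype ι]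
    [Fintype κ] [DecidableEq κ] (c : ι → κ) (f : κ → R) {ξ : ι → R} {ξ' : κ → R}
    (hξ : ∀ j, ξ' j = ∑ i ∈ univ.filter (fun i => c i = j), ξ i) :
    ∑ j, f j * ξ' j = ∑ i, f (c i) * ξ i := by
  simp_rw [hξ, mul_sum]
  rw [← sum_fiberwise univ c (fun i => f (c i) * ξ i)]
  refine sum_congr rfl fun j _ => sum_congr rfl fun i hi => ?_
  rw [(mem_filter.1 hi).2]

lemma sum_abs_le_sqrt_card_mul_sum_sq {ι : Type*} (s : Finset ι) (f : ι → ℝ) :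
    ∑ i ∈ s, |f i| ≤ √(#s * ∑ i ∈ s, f i ^ 2) :=
  Real.le_sqrt_of_sq_le <| by
    simpa only [sq_abs] using sq_sum_le_card_mul_sum_sq (s := s) (f := fun i => |f i|)

lemma abs_sum_sub_mul_le_of_holder {X ι : Type*} [PseudoMetricSpace X] [Fintype ι] {g : X → ℝ}
    {K β δ : ℝ} (hK : 0 ≤ K) (hβ : 0 ≤ β) (hg : ∀ a b, |g a - g b| ≤ K * dist a b ^ β)
    {p q : ι → X} (hpq : ∀ i, dist (p i) (q i) ≤ δ) (ξ : ι → ℝ) :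
    |∑ i, (g (p i) - g (q i)) * ξ i| ≤ K * δ ^ β * ∑ i, |ξ i| := by
  rw [mul_sum]
  refine (abs_sum_le_sum_abs _ _).trans (sum_le_sum fun i _ => ?_)
  rw [abs_mul]
  gcongr
  exact (hg _ _).trans (by gcongr; exact hpq i)

lemma Summable.sqrt_mul {u v : ℕ → ℝ} (hu0 : ∀ n, 0 ≤ u n) (hv0 : ∀ n, 0 ≤ v n)
    (hu : Summable u) (hv : Summable v) : Summable fun n => √(u n * v n) :=
  (hu.add hv).of_nonneg_of_le (fun _ => Real.sqrt_nonneg _) fun n =>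
    Real.sqrt_le_iff.2 ⟨add_nonneg (hu0 n) (hv0 n), by nlinarith [hu0 n, hv0 n]⟩

lemma natCast_lt_rpow_of_log_div_log_lt {α s : ℝ} (hα : 1 < α) {N : ℕ}
    (h : Real.log N / Real.log α < s) : (N : ℝ) < α ^ s := by
  rcases N.eq_zero_or_pos with rfl | hN
  · simpa using Real.rpow_pos_of_pos (zero_lt_one.trans hα) s
  · calc (N : ℝ) = α ^ (Real.log N / Real.log α) := by
          rw [Real.log_div_log, Real.rpow_logb (zero_lt_one.trans hα) hα.ne' (by positivity)]
      _ < α ^ s := Real.rpow_lt_rpow_of_exponent_lt hα h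

lemma summable_inv_pow_rpow_mul_sqrt {α βh β : ℝ} (hα : 1 < α) {N : ℕ}
    (hβ : β < βh - Real.log N / Real.log α / 2) {Q : ℕ → ℝ} (hQ : ∀ n, 0 ≤ Q n)
    (hsum : Summable fun n : ℕ => α ^ (-(2 * (n : ℝ) * β)) * Q n) :
    Summable fun n : ℕ => ((α ^ n)⁻¹) ^ βh * √(N ^ (n + 1) * Q n) := by
  have hα0 : 0 < α := zero_lt_one.trans hα
  set r : ℝ := N * α ^ (2 * β - 2 * βh)
  have hr0 : 0 ≤ r := mul_nonneg (Nat.cast_nonneg N) (Real.rpow_nonneg hα0.le _)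
  have hr1 : r < 1 :=
    calc r < α ^ (2 * βh - 2 * β) * α ^ (2 * β - 2 * βh) :=
          mul_lt_mul_of_pos_right (natCast_lt_rpow_of_log_div_log_lt hα (by linarith))
            (Real.rpow_pos_of_pos hα0 _)
      _ = 1 := by rw [← Real.rpow_add hα0]; simp
  set θ : ℝ := α ^ (-βh)
  set σ : ℝ := α ^ (-2 * β)
  have hrσ : r * σ = N * θ ^ 2 := by
    rw [mul_assoc, ← Real.rpow_add hα0, ← Real.rpow_natCast, ← Real.rpow_mul hα0.le]; ring_nf
  refine (((summable_geometric_of_lt_one hr0 hr1).sqrt_mul (fun n => pow_nonneg hr0 n)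
    (fun n => mul_nonneg (Real.rpow_nonneg hα0.le _) (hQ n)) hsum).mul_left √N).congr fun n => ?_
  have hθ : ((α ^ n)⁻¹) ^ βh = θ ^ n := by
    rw [← inv_pow, ← Real.rpow_pow_comm (inv_nonneg.2 hα0.le), Real.inv_rpow hα0.le,
      ← Real.rpow_neg hα0.le]
  have hσ : α ^ (-(2 * (n : ℝ) * β)) = σ ^ n := by
    rw [← Real.rpow_natCast, ← Real.rpow_mul hα0.le]; ring_nf
  have hθn : 0 ≤ θ ^ n := pow_nonneg (Real.rpow_nonneg hα0.le _) n
  rw [hθ, hσ, ← Real.sqrt_mul (by positivity), ← Real.sqrt_sq hθn, ← Real.sqrt_mul (sq_nonneg _)]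
  congr 1
  rw [← mul_assoc (r ^ n), ← mul_pow, hrσ]
  ring

theorem exists_continuous_tendstoUniformly_of_dist_le_summable {Z E : Type*}
    [TopologicalSpace Z] [PseudoMetricSpace E] [CompleteSpace E] {F : ℕ → Z → E}
    (hF : ∀ n, Continuous (F n)) {b : ℕ → ℝ} (hb : Summable b)
    (hFb : ∀ n z, dist (F n z) (F (n + 1) z) ≤ b n) :
    ∃ η : Z → E, Continuous η ∧ TendstoUniformly F η atTop := by
  choose η hη using fun z =>
    cauchySeq_tendsto_of_complete (cauchySeq_of_dist_le_of_summable b (hFb · z) hb)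
  have hunif : TendstoUniformly F η atTop := by
    refine Metric.tendstoUniformly_iff.2 fun ε hε => ?_
    filter_upwards [(tendsto_sum_nat_add b).eventually (gt_mem_nhds hε)] with n hn z
    rw [dist_comm]
    refine (dist_le_tsum_of_dist_le_of_tendsto b (hFb · z) hb (hη z) n).trans_lt ?_
    simpa only [add_comm] using hn
  exact ⟨η, hunif.continuous (Frequently.of_forall hF), hunif⟩

theorem statement0_general
    {X : Type*} [MetricSpace X] {Z : Type*} [TopologicalSpace Z]
    (α : ℝ) (hα : 1 < α) (N : ℕ)
    (E : ∀ n : ℕ, Fin (N ^ n) → Set X)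
    (hE_diam : ∀ n k, EMetric.diam (E n k) ≤ ENNReal.ofReal ((α ^ n)⁻¹))
    (c : ∀ n : ℕ, Fin (N ^ (n + 1)) → Fin (N ^ n))
    (hc : ∀ n k, E (n + 1) k ⊆ E n (c n k))
    (ξ : ∀ n : ℕ, Fin (N ^ n) → ℝ)
    (hξ : ∀ n k', ξ n k' = ∑ k ∈ Finset.univ.filter (fun k => c n k = k'), ξ (n + 1) k)
    (y : ∀ n : ℕ, Fin (N ^ n) → X)
    (hy : ∀ n k, y n k ∈ E n k)
    (h : Z → X → ℝ)
    (h_cont : ∀ x, Continuous fun z => h z x)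
    (Kh βh : ℝ) (hKh : 0 < Kh)
    (hβh : Real.log N / Real.log α / 2 < βh)
    (h_hold : ∀ z (y₁ y₂ : X), |h z y₁ - h z y₂| ≤ Kh * dist y₁ y₂ ^ βh)
    (S : ℕ → Z → ℝ)
    (hS : ∀ n z, S n z = ∑ k, h z (y n k) * ξ n k)
    (β : ℝ) (hβ : β < βh - Real.log N / Real.log α / 2)
    (hsum : Summable fun n : ℕ =>
      α ^ (-(2 * (n : ℝ) * β)) * ∑ k, (ξ (n + 1) k) ^ 2) :
    (Summable fun n : ℕ => ⨆ z : Z, |S (n + 1) z - S n z|) ∧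
      ∃ η : Z → ℝ, Continuous η ∧ TendstoUniformly S η atTop := by
  have hβh0 : 0 ≤ βh := (div_nonneg (div_nonneg (Real.log_natCast_nonneg N)
    (Real.log_pos hα).le) zero_le_two).trans hβh.le
  have hS_cont (n : ℕ) : Continuous (S n) := by
    rw [show S n = _ from funext (hS n)]; fun_prop
  have hS_sub (n : ℕ) (z : Z) : S (n + 1) z - S n z
      = ∑ k, (h z (y (n + 1) k) - h z (y n (c n k))) * ξ (n + 1) k := by
    rw [hS, hS, sum_mul_eq_sum_comp_mul_of_eq_sum_fiber (c n) _ (hξ n), ← sum_sub_distrib]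
    simp_rw [sub_mul]
  have hS_sub_le (n : ℕ) (z : Z) : |S (n + 1) z - S n z|
      ≤ Kh * (((α ^ n)⁻¹) ^ βh * √(N ^ (n + 1) * ∑ k, ξ (n + 1) k ^ 2)) := by
    have hdist (k) : dist (y (n + 1) k) (y n (c n k)) ≤ (α ^ n)⁻¹ :=
      dist_le_of_mem_of_ediam_le (by positivity) (hE_diam n (c n k)) (hc n k (hy (n + 1) k))
        (hy n (c n k))
    rw [hS_sub, ← mul_assoc]
    refine (abs_sum_sub_mul_le_of_holder hKh.le hβh0 (h_hold z) hdist _).trans ?_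
    gcongr
    simpa using sum_abs_le_sqrt_card_mul_sum_sq univ (ξ (n + 1))
  have hb := (summable_inv_pow_rpow_mul_sqrt hα hβ
    (fun n => sum_nonneg fun k _ => sq_nonneg (ξ (n + 1) k)) hsum).mul_left Kh
  refine ⟨hb.of_nonneg_of_le (fun n => Real.iSup_nonneg fun z => abs_nonneg _)
    fun n => Real.iSup_le (hS_sub_le n) (mul_nonneg hKh.le (by positivity)), ?_⟩
  exact exists_continuous_tendstoUniformly_of_dist_le_summable hS_cont hb fun n z => by
    rw [dist_comm, Real.dist_eq]
    exact hS_sub_le n z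

/-- Context: `(X,d)` a metric space, `α > 1`, `N ≥ 2`, `d_f = log N / log α`.  For each `n ≥ 0`
nonempty sets `E n k ⊆ X` (`k` among `N^n` indices) of diameter at most `α^{ -n}`, with a
parent map `c` such that `E (n+1) k ⊆ E n (c n k)`; real numbers `ξ n k` additive under
refinement; points `y n k ∈ E n k`; `Z` a topological space; `h : Z × X → ℝ` bounded,
continuous in the first variable, and Hölder in the second with exponent `β_h > d_f/2` and
constant `K_h > 0`; and `S n z = ∑_{k} h(z, y n k) ξ n k`.

Claim: if `0 < β < β_h − d_f/2` and `∑_{n≥0} α^{−2nβ} ∑_k (ξ^{(n+1)}_k)² < ∞`, then the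
series `∑_{n≥0} sup_z |S^{(n+1)}(z) − S^{(n)}(z)|` converges; consequently the `S^{(n)}`
converge uniformly on `Z` to a continuous function `η : Z → ℝ`. -/
theorem statement0
    {X : Type*} [MetricSpace X] {Z : Type*} [TopologicalSpace Z]
    (α : ℝ) (hα : 1 < α) (N : ℕ) (hN : 2 ≤ N)
    (E : ∀ n : ℕ, Fin (N ^ n) → Set X)
    (hE_ne : ∀ n k, (E n k).Nonempty)
    (hE_diam : ∀ n k, EMetric.diam (E n k) ≤ ENNReal.ofReal ((α ^ n)⁻¹))
    (c : ∀ n : ℕ, Fin (N ^ (n + 1)) → Fin (N ^ n))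
    (hc : ∀ n k, E (n + 1) k ⊆ E n (c n k))
    (ξ : ∀ n : ℕ, Fin (N ^ n) → ℝ)
    (hξ : ∀ n k', ξ n k' = ∑ k ∈ Finset.univ.filter (fun k => c n k = k'), ξ (n + 1) k)
    (y : ∀ n : ℕ, Fin (N ^ n) → X)
    (hy : ∀ n k, y n k ∈ E n k)
    (h : Z → X → ℝ)
    (Mh : ℝ) (h_bdd : ∀ z x, |h z x| ≤ Mh)
    (h_cont : ∀ x, Continuous fun z => h z x)
    (Kh βh : ℝ) (hKh : 0 < Kh)
    (hβh : Real.log N / Real.log α / 2 < βh)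
    (h_hold : ∀ z (y₁ y₂ : X), |h z y₁ - h z y₂| ≤ Kh * dist y₁ y₂ ^ βh)
    (S : ℕ → Z → ℝ)
    (hS : ∀ n z, S n z = ∑ k, h z (y n k) * ξ n k)
    (β : ℝ) (hβ0 : 0 < β) (hβ : β < βh - Real.log N / Real.log α / 2)
    (hsum : Summable fun n : ℕ =>
      α ^ (-(2 * (n : ℝ) * β)) * ∑ k, (ξ (n + 1) k) ^ 2) :
    (Summable fun n : ℕ => ⨆ z : Z, |S (n + 1) z - S n z|) ∧
      ∃ η : Z → ℝ, Continuous η ∧ TendstoUniformly S η atTop :=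
  statement0_general α hα N E hE_diam c hc ξ hξ y hy h h_cont Kh βh hKh hβh h_hold S hS β hβ hsum
end

section
/- Let A, B, T > 0, let a > 0, let b ∈ (0,1), and let β ∈ (0,a). Then there exists a constant C > 0 such that for all t ∈ (0,T] and all δ ∈ (0,1], ∫₀^t min( A s^{−1} δ^a , B s^{−b} ) ds ≤ C δ^β. -/
open MeasureTheory Set

/-!
Interpolate between the two terms: `min x y ≤ x ^ θ * y ^ (1 - θ)` with `θ = β / a` bounds the
integrand by `A ^ θ * B ^ (1 - θ) * δ ^ β * s ^ (-(θ + b * (1 - θ)))`. Since `b < 1` and `θ < 1`,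
this power of `s` has exponent greater than `-1`, so it is integrable at `0`, and its integral over
`(0, t)` is bounded uniformly in `t ≤ T`.
-/

lemma Real.min_le_rpow_mul_rpow {x y θ : ℝ} (hx : 0 ≤ x) (hy : 0 ≤ y) (hθ₀ : 0 ≤ θ)
    (hθ₁ : θ ≤ 1) : min x y ≤ x ^ θ * y ^ (1 - θ) := by
  have hm : 0 ≤ min x y := le_min hx hy
  calc min x y = min x y ^ θ * min x y ^ (1 - θ) := by
        rw [← Real.rpow_add' hm (by norm_num), add_sub_cancel, Real.rpow_one]
    _ ≤ x ^ θ * y ^ (1 - θ) := by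
        have : 0 ≤ 1 - θ := sub_nonneg.2 hθ₁
        gcongr
        exacts [min_le_left _ _, min_le_right _ _]

lemma min_mul_inv_mul_rpow_le {A B a b θ δ s : ℝ} (hA : 0 ≤ A) (hB : 0 ≤ B) (hδ : 0 ≤ δ)
    (hs : 0 < s) (hθ₀ : 0 ≤ θ) (hθ₁ : θ ≤ 1) :
    min (A * s⁻¹ * δ ^ a) (B * s ^ (-b)) ≤
      A ^ θ * B ^ (1 - θ) * δ ^ (a * θ) * s ^ (-(θ + b * (1 - θ))) := by
  refine (Real.min_le_rpow_mul_rpow (by positivity) (by positivity) hθ₀ hθ₁).trans_eq ?_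
  rw [← Real.rpow_neg_one, Real.mul_rpow (by positivity) (by positivity),
    Real.mul_rpow hA (by positivity), Real.mul_rpow hB (by positivity), ← Real.rpow_mul hs.le,
    ← Real.rpow_mul hδ, ← Real.rpow_mul hs.le,
    show -(θ + b * (1 - θ)) = -1 * θ + -b * (1 - θ) by ring, Real.rpow_add hs]
  ring

lemma integral_Ioo_zero_rpow_neg {e t : ℝ} (he : e < 1) (ht : 0 ≤ t) :
    ∫ s in Ioo 0 t, s ^ (-e) = t ^ (1 - e) / (1 - e) := by
  rw [← integral_Ioc_eq_integral_Ioo, ← intervalIntegral.integral_of_le ht,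
    integral_rpow (Or.inl (by linarith)), Real.zero_rpow (by linarith)]
  ring_nf

theorem integral_min_mul_inv_mul_rpow_le {A B a b θ δ t : ℝ} (hA : 0 ≤ A) (hB : 0 ≤ B)
    (hδ : 0 ≤ δ) (ht : 0 ≤ t) (hθ₀ : 0 ≤ θ) (hθ₁ : θ < 1) (hb : b < 1) :
    ∫ s in Ioo 0 t, min (A * s⁻¹ * δ ^ a) (B * s ^ (-b)) ≤
      A ^ θ * B ^ (1 - θ) * δ ^ (a * θ) *
        (t ^ (1 - (θ + b * (1 - θ))) / (1 - (θ + b * (1 - θ)))) := by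
  have he : θ + b * (1 - θ) < 1 := by nlinarith
  have hg : IntegrableOn (fun s : ℝ ↦ s ^ (-(θ + b * (1 - θ)))) (Ioo 0 t) := by
    rcases ht.eq_or_lt with rfl | ht
    · simp
    · exact (intervalIntegral.integrableOn_Ioo_rpow_iff ht).2 (by linarith)
  rw [← integral_Ioo_zero_rpow_neg he ht, ← integral_const_mul]
  refine integral_mono_of_nonneg ?_ (hg.const_mul _) ?_
  all_goals
    filter_upwards [ae_restrict_mem measurableSet_Ioo] with s hs
  · have := hs.1
    positivity
  · exact min_mul_inv_mul_rpow_le hA hB hδ hs.1 hθ₀ hθ₁.le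

/-- Let `A, B, T > 0`, `a > 0`, `b ∈ (0,1)`, `β ∈ (0,a)`.  Then there exists `C > 0` such
that for all `t ∈ (0,T]` and `δ ∈ (0,1]`,
`∫₀ᵗ min(A s⁻¹ δ^a, B s^{−b}) ds ≤ C δ^β`,
the integral being the Lebesgue integral over `s ∈ (0,t)`. -/
theorem statement2
    (A B T a b β : ℝ)
    (hA : 0 < A) (hB : 0 < B) (hT : 0 < T)
    (ha : 0 < a) (hb : b ∈ Set.Ioo (0 : ℝ) 1) (hβ : β ∈ Set.Ioo 0 a) :
    ∃ C : ℝ, 0 < C ∧ ∀ t ∈ Set.Ioc (0 : ℝ) T, ∀ δ ∈ Set.Ioc (0 : ℝ) 1,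
      (∫ s in Set.Ioo (0 : ℝ) t, min (A * s⁻¹ * δ ^ a) (B * s ^ (-b))) ≤ C * δ ^ β := by
  set θ := β / a
  have hθ₀ : 0 ≤ θ := div_nonneg hβ.1.le ha.le
  have hθ₁ : θ < 1 := (div_lt_one ha).2 hβ.2
  have haθ : a * θ = β := mul_div_cancel₀ β ha.ne'
  set e := θ + b * (1 - θ)
  have he : 0 < 1 - e := by nlinarith [hb.2]
  refine ⟨A ^ θ * B ^ (1 - θ) * (T ^ (1 - e) / (1 - e)), by positivity, ?_⟩
  rintro t ⟨ht₀, htT⟩ δ ⟨hδ₀, -⟩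
  calc _ ≤ A ^ θ * B ^ (1 - θ) * δ ^ (a * θ) * (t ^ (1 - e) / (1 - e)) :=
        integral_min_mul_inv_mul_rpow_le hA.le hB.le hδ₀.le ht₀.le hθ₀ hθ₁ hb.2
    _ ≤ A ^ θ * B ^ (1 - θ) * δ ^ β * (T ^ (1 - e) / (1 - e)) := by
        rw [haθ]
        gcongr
    _ = _ := by ring
end

section
/- For every β_h with 0 < β_h < min(a, β_σ) there exists a constant K_h > 0 such that for all t ∈ [0,T], all x ∈ X and all y₁, y₂ ∈ X with d(y₁,y₂) ≤ 1, |h(t,x,y₁) − h(t,x,y₂)| ≤ K_h d(y₁,y₂)^{β_h}. -/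
/-!
Since `0 ≤ p ≤ c₂ u^{-b}`, the kernel difference `|p(u,x,y₁) - p(u,x,y₂)|` is bounded both by
`c₂ u^{-b}` and by `c₁ u⁻¹ d^a`, hence by their weighted geometric mean with weight `θ = β_h / a`:
`C d^{β_h} u^{-r}` with `r = (1 - θ) b + θ < 1`, which is integrable near `u = 0`. Writing
`h(t,x,y₁) - h(t,x,y₂) = ∫ Δp · σ(y₁) + ∫ p(y₂) · Δσ`, both terms are `O(d^{β_h})`, using
`d^{β_σ} ≤ d^{β_h}` for `d ≤ 1`.
-/

open MeasureTheory Set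

lemma le_rpow_mul_rpow_of_le_of_le {z A B θ : ℝ} (hz : 0 ≤ z) (hA : z ≤ A) (hB : z ≤ B)
    (hθ0 : 0 ≤ θ) (hθ1 : θ ≤ 1) : z ≤ A ^ (1 - θ) * B ^ θ := calc
  z = z ^ (1 - θ) * z ^ θ := by
    rw [← Real.rpow_add' hz (by norm_num), sub_add_cancel, Real.rpow_one]
  _ ≤ A ^ (1 - θ) * B ^ θ := by
    have hA0 : 0 ≤ A := hz.trans hA
    gcongr

lemma abs_sub_le_rpow_of_holder_of_le_rpow {u c₁ c₂ a b D θ P₁ P₂ : ℝ} (hu : 0 < u)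
    (hc₁ : 0 ≤ c₁) (hc₂ : 0 ≤ c₂) (hD : 0 ≤ D) (hθ0 : 0 ≤ θ) (hθ1 : θ ≤ 1)
    (hP₁ : P₁ ∈ Icc 0 (c₂ * u ^ (-b))) (hP₂ : P₂ ∈ Icc 0 (c₂ * u ^ (-b)))
    (hP : |P₁ - P₂| ≤ c₁ * u⁻¹ * D ^ a) :
    |P₁ - P₂| ≤ c₂ ^ (1 - θ) * c₁ ^ θ * D ^ (a * θ) * u ^ (-((1 - θ) * b + θ)) := calc
  |P₁ - P₂| ≤ (c₂ * u ^ (-b)) ^ (1 - θ) * (c₁ * u⁻¹ * D ^ a) ^ θ :=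
    le_rpow_mul_rpow_of_le_of_le (abs_nonneg _)
      (abs_sub_le_of_nonneg_of_le hP₁.1 hP₁.2 hP₂.1 hP₂.2) hP hθ0 hθ1
  _ = c₂ ^ (1 - θ) * c₁ ^ θ * D ^ (a * θ) * u ^ (-((1 - θ) * b + θ)) := by
    rw [Real.mul_rpow hc₂ (by positivity), Real.mul_rpow (by positivity) (by positivity),
      Real.mul_rpow hc₁ (by positivity), ← Real.rpow_mul hu.le, ← Real.rpow_mul hD,
      Real.inv_rpow hu.le, ← Real.rpow_neg hu.le, neg_add, Real.rpow_add hu]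
    ring_nf

lemma integrableOn_Ioo_sub_rpow_neg {t r : ℝ} (ht : 0 ≤ t) (hr : r < 1) :
    IntegrableOn (fun s ↦ (t - s) ^ (-r)) (Ioo 0 t) := by
  have hpow := ((intervalIntegral.intervalIntegrable_rpow' (a := 0) (b := t)
    (by linarith : -1 < -r)).comp_sub_left t).symm
  simp only [sub_zero, sub_self] at hpow
  exact (intervalIntegrable_iff_integrableOn_Ioo_of_le ht).1 hpow

lemma integral_Ioo_sub_rpow_neg {t r : ℝ} (ht : 0 ≤ t) (hr : r < 1) :
    ∫ s in Ioo 0 t, (t - s) ^ (-r) = t ^ (1 - r) / (1 - r) := by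
  rw [← integral_Ioc_eq_integral_Ioo, ← intervalIntegral.integral_of_le ht,
    intervalIntegral.integral_comp_sub_left (fun u ↦ u ^ (-r)), sub_zero, sub_self,
    integral_rpow (Or.inl (by linarith)), Real.zero_rpow (by linarith), sub_zero, neg_add_eq_sub]

section SingularKernel

variable {F G : ℝ → ℝ} {t r A B : ℝ}

lemma norm_mul_le_sub_rpow_neg (hF : ∀ s ∈ Ioo 0 t, |F s| ≤ A * (t - s) ^ (-r))
    (hG : ∀ s ∈ Ioo 0 t, |G s| ≤ B) : ∀ s ∈ Ioo 0 t, ‖F s * G s‖ ≤ A * B * (t - s) ^ (-r) :=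
  fun s hs ↦ (norm_mul_le_of_le (hF s hs) (hG s hs)).trans_eq (by ring)

lemma integrableOn_Ioo_mul_of_abs_le (ht : 0 ≤ t) (hr : r < 1)
    (hm : AEStronglyMeasurable (fun s ↦ F s * G s) (volume.restrict (Ioo 0 t)))
    (hF : ∀ s ∈ Ioo 0 t, |F s| ≤ A * (t - s) ^ (-r)) (hG : ∀ s ∈ Ioo 0 t, |G s| ≤ B) :
    IntegrableOn (fun s ↦ F s * G s) (Ioo 0 t) :=
  ((integrableOn_Ioo_sub_rpow_neg ht hr).const_mul (A * B)).mono' hm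
    (ae_restrict_of_forall_mem measurableSet_Ioo (norm_mul_le_sub_rpow_neg hF hG))

lemma abs_integral_Ioo_mul_le (ht : 0 ≤ t) (hr : r < 1)
    (hF : ∀ s ∈ Ioo 0 t, |F s| ≤ A * (t - s) ^ (-r)) (hG : ∀ s ∈ Ioo 0 t, |G s| ≤ B) :
    |∫ s in Ioo 0 t, F s * G s| ≤ A * B * (t ^ (1 - r) / (1 - r)) := by
  rw [← integral_Ioo_sub_rpow_neg ht hr, ← integral_const_mul]
  exact norm_integral_le_of_norm_le ((integrableOn_Ioo_sub_rpow_neg ht hr).const_mul _)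
    (ae_restrict_of_forall_mem measurableSet_Ioo (norm_mul_le_sub_rpow_neg hF hG))

end SingularKernel

lemma integral_mul_sub_integral_mul {α : Type*} [MeasurableSpace α] {μ : Measure α}
    {f₁ f₂ g₁ g₂ : α → ℝ} (h₁₁ : Integrable (fun x ↦ f₁ x * g₁ x) μ)
    (h₂₁ : Integrable (fun x ↦ f₂ x * g₁ x) μ) (h₂₂ : Integrable (fun x ↦ f₂ x * g₂ x) μ) :
    ∫ x, f₁ x * g₁ x ∂μ - ∫ x, f₂ x * g₂ x ∂μ =
      ∫ x, (f₁ x - f₂ x) * g₁ x ∂μ + ∫ x, f₂ x * (g₁ x - g₂ x) ∂μ := by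
  simp only [sub_mul, mul_sub]
  rw [integral_sub h₁₁ h₂₁, integral_sub h₂₁ h₂₂]
  ring

lemma kernel_abs_sub_le_rpow {X : Type*} [MetricSpace X] {p : ℝ → X → X → ℝ}
    {T c₁ c₂ a b θ : ℝ} (hc₁ : 0 ≤ c₁) (hc₂ : 0 ≤ c₂) (hθ0 : 0 ≤ θ) (hθ1 : θ ≤ 1)
    (hp_nonneg : ∀ t ∈ Ioc (0 : ℝ) T, ∀ x y : X, 0 ≤ p t x y)
    (hp_hold : ∀ t ∈ Ioc (0 : ℝ) T, ∀ x y₁ y₂ : X,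
      |p t x y₁ - p t x y₂| ≤ c₁ * t⁻¹ * dist y₁ y₂ ^ a)
    (hp_ub : ∀ t ∈ Ioc (0 : ℝ) T, ∀ x y : X, p t x y ≤ c₂ * t ^ (-b))
    {u : ℝ} (hu : u ∈ Ioc 0 T) (x y₁ y₂ : X) :
    |p u x y₁ - p u x y₂| ≤
      c₂ ^ (1 - θ) * c₁ ^ θ * dist y₁ y₂ ^ (a * θ) * u ^ (-((1 - θ) * b + θ)) :=
  abs_sub_le_rpow_of_holder_of_le_rpow hu.1 hc₁ hc₂ dist_nonneg hθ0 hθ1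
    ⟨hp_nonneg u hu x y₁, hp_ub u hu x y₁⟩ ⟨hp_nonneg u hu x y₂, hp_ub u hu x y₂⟩
    (hp_hold u hu x y₁ y₂)

theorem statement3_general
    {X : Type*} [MetricSpace X] [MeasurableSpace X]
    (T : ℝ) (hT : 0 < T)
    (p : ℝ → X → X → ℝ)
    (hp_meas : Measurable fun q : ℝ × X × X => p q.1 q.2.1 q.2.2)
    (hp_nonneg : ∀ t ∈ Set.Ioc (0 : ℝ) T, ∀ x y : X, 0 ≤ p t x y)
    (c₁ c₂ a b : ℝ) (hc₁ : 0 < c₁) (hc₂ : 0 < c₂) (ha : 0 < a)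
    (hb : b ∈ Set.Ioo (0 : ℝ) 1)
    (hp_hold : ∀ t ∈ Set.Ioc (0 : ℝ) T, ∀ x y₁ y₂ : X,
      |p t x y₁ - p t x y₂| ≤ c₁ * t⁻¹ * dist y₁ y₂ ^ a)
    (hp_ub : ∀ t ∈ Set.Ioc (0 : ℝ) T, ∀ x y : X, p t x y ≤ c₂ * t ^ (-b))
    (σ : ℝ → X → ℝ)
    (hσ_meas : Measurable fun q : ℝ × X => σ q.1 q.2)
    (Cσ Kσ βσ : ℝ) (hCσ : 0 < Cσ) (hKσ : 0 < Kσ)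
    (hσ_bdd : ∀ s ∈ Set.Icc (0 : ℝ) T, ∀ y : X, |σ s y| ≤ Cσ)
    (hσ_hold : ∀ s ∈ Set.Icc (0 : ℝ) T, ∀ y₁ y₂ : X,
      |σ s y₁ - σ s y₂| ≤ Kσ * dist y₁ y₂ ^ βσ)
    (h : ℝ → X → X → ℝ)
    (hh : ∀ t x y, h t x y = ∫ s in Set.Ioo (0 : ℝ) t, p (t - s) x y * σ s y)
    (βh : ℝ) (hβh0 : 0 < βh) (hβh : βh < min a βσ) :
    ∃ Kh : ℝ, 0 < Kh ∧ ∀ t ∈ Set.Icc (0 : ℝ) T, ∀ x y₁ y₂ : X, dist y₁ y₂ ≤ 1 →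
      |h t x y₁ - h t x y₂| ≤ Kh * dist y₁ y₂ ^ βh := by
  obtain ⟨-, hb1⟩ := hb
  set θ := βh / a
  have hθ0 : 0 ≤ θ := div_nonneg hβh0.le ha.le
  have hθ1 : θ < 1 := (div_lt_one ha).2 (hβh.trans_le (min_le_left _ _))
  set r := (1 - θ) * b + θ
  have hr : r < 1 := by nlinarith
  have hr' := sub_pos.2 hr
  have hb' := sub_pos.2 hb1
  refine ⟨Cσ * (c₂ ^ (1 - θ) * c₁ ^ θ) * (T ^ (1 - r) / (1 - r)) +
    c₂ * Kσ * (T ^ (1 - b) / (1 - b)), by positivity, ?_⟩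
  rintro t ⟨ht0, htT⟩ x y₁ y₂ hd
  have hmem : ∀ s ∈ Ioo 0 t, t - s ∈ Ioc 0 T ∧ s ∈ Icc 0 T := fun s hs ↦
    ⟨⟨by linarith [hs.2], by linarith [hs.1]⟩, ⟨hs.1.le, by linarith [hs.2]⟩⟩
  have hp_abs : ∀ u ∈ Ioc 0 T, ∀ y, |p u x y| ≤ c₂ * u ^ (-b) := fun u hu y ↦
    (abs_of_nonneg (hp_nonneg u hu x y)).trans_le (hp_ub u hu x y)
  have hint : ∀ y y', IntegrableOn (fun s ↦ p (t - s) x y * σ s y') (Ioo 0 t) := fun y y' ↦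
    integrableOn_Ioo_mul_of_abs_le ht0 hb1
      ((hp_meas.comp (f := fun s ↦ (t - s, x, y)) (by fun_prop)).mul
        (hσ_meas.comp (f := fun s ↦ (s, y')) (by fun_prop))).aestronglyMeasurable
      (fun s hs ↦ hp_abs _ (hmem s hs).1 y) fun s hs ↦ hσ_bdd s (hmem s hs).2 y'
  have hkernel := abs_integral_Ioo_mul_le ht0 hr
    (fun s hs ↦ kernel_abs_sub_le_rpow hc₁.le hc₂.le hθ0 hθ1.le
      hp_nonneg hp_hold hp_ub (hmem s hs).1 x y₁ y₂) fun s hs ↦ hσ_bdd s (hmem s hs).2 y₁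
  have hsource := abs_integral_Ioo_mul_le ht0 hb1
    (fun s hs ↦ hp_abs _ (hmem s hs).1 y₂) fun s hs ↦ hσ_hold s (hmem s hs).2 y₁ y₂
  have hdist : dist y₁ y₂ ^ βσ ≤ dist y₁ y₂ ^ βh := Real.rpow_le_rpow_of_exponent_ge'
    dist_nonneg hd hβh0.le (hβh.trans_le (min_le_right _ _)).le
  rw [mul_div_cancel₀ βh ha.ne'] at hkernel
  rw [hh, hh, integral_mul_sub_integral_mul (hint y₁ y₁) (hint y₂ y₁) (hint y₂ y₂)]
  calc _ ≤ _ := abs_add_le _ _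
    _ ≤ _ := add_le_add hkernel hsource
    _ ≤ c₂ ^ (1 - θ) * c₁ ^ θ * dist y₁ y₂ ^ βh * Cσ * (T ^ (1 - r) / (1 - r)) +
        c₂ * (Kσ * dist y₁ y₂ ^ βh) * (T ^ (1 - b) / (1 - b)) := by gcongr
    _ = _ := by ring

/-- Context: `(X,d)` a metric space, `T > 0`, `p : (0,T] × X × X → [0,∞)` a measurable
kernel with (i) `|p(t,x,y₁) − p(t,x,y₂)| ≤ c₁ t⁻¹ d(y₁,y₂)^a` and
(ii) `p(t,x,y) ≤ c₂ t^{−b}` (`c₁, c₂ > 0`, `a > 0`, `b ∈ (0,1)`); `σ : [0,T] × X → ℝ`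
measurable with `|σ| ≤ C_σ` and `|σ(s,y₁) − σ(s,y₂)| ≤ K_σ d(y₁,y₂)^{β_σ}`
(`C_σ, K_σ > 0`, `β_σ > 0`); and `h(t,x,y) = ∫₀ᵗ p(t−s,x,y) σ(s,y) ds`.

Claim: for every `β_h` with `0 < β_h < min(a, β_σ)` there is `K_h > 0` such that for all
`t ∈ [0,T]`, `x ∈ X` and `y₁, y₂ ∈ X` with `d(y₁,y₂) ≤ 1`,
`|h(t,x,y₁) − h(t,x,y₂)| ≤ K_h d(y₁,y₂)^{β_h}`. -/
theorem statement3
    {X : Type*} [MetricSpace X] [MeasurableSpace X]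
    (T : ℝ) (hT : 0 < T)
    (p : ℝ → X → X → ℝ)
    (hp_meas : Measurable fun q : ℝ × X × X => p q.1 q.2.1 q.2.2)
    (hp_nonneg : ∀ t ∈ Set.Ioc (0 : ℝ) T, ∀ x y : X, 0 ≤ p t x y)
    (c₁ c₂ a b : ℝ) (hc₁ : 0 < c₁) (hc₂ : 0 < c₂) (ha : 0 < a)
    (hb : b ∈ Set.Ioo (0 : ℝ) 1)
    (hp_hold : ∀ t ∈ Set.Ioc (0 : ℝ) T, ∀ x y₁ y₂ : X,
      |p t x y₁ - p t x y₂| ≤ c₁ * t⁻¹ * dist y₁ y₂ ^ a)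
    (hp_ub : ∀ t ∈ Set.Ioc (0 : ℝ) T, ∀ x y : X, p t x y ≤ c₂ * t ^ (-b))
    (σ : ℝ → X → ℝ)
    (hσ_meas : Measurable fun q : ℝ × X => σ q.1 q.2)
    (Cσ Kσ βσ : ℝ) (hCσ : 0 < Cσ) (hKσ : 0 < Kσ) (hβσ : 0 < βσ)
    (hσ_bdd : ∀ s ∈ Set.Icc (0 : ℝ) T, ∀ y : X, |σ s y| ≤ Cσ)
    (hσ_hold : ∀ s ∈ Set.Icc (0 : ℝ) T, ∀ y₁ y₂ : X,
      |σ s y₁ - σ s y₂| ≤ Kσ * dist y₁ y₂ ^ βσ)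
    (h : ℝ → X → X → ℝ)
    (hh : ∀ t x y, h t x y = ∫ s in Set.Ioo (0 : ℝ) t, p (t - s) x y * σ s y)
    (βh : ℝ) (hβh0 : 0 < βh) (hβh : βh < min a βσ) :
    ∃ Kh : ℝ, 0 < Kh ∧ ∀ t ∈ Set.Icc (0 : ℝ) T, ∀ x y₁ y₂ : X, dist y₁ y₂ ≤ 1 →
      |h t x y₁ - h t x y₂| ≤ Kh * dist y₁ y₂ ^ βh :=
  statement3_general T hT p hp_meas hp_nonneg c₁ c₂ a b hc₁ hc₂ ha hb hp_hold hp_ub σ hσ_meas Cσ Kσ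
    βσ hCσ hKσ hσ_bdd hσ_hold h hh βh hβh0 hβh
end

section
/- Let (T, 𝒯) be a measurable space and (Ω, ℱ, P) a probability space. Let u_i : T × Ω → ℝ, i ∈ ℕ, be jointly measurable functions and u : T × Ω → ℝ a function such that for every t ∈ T the sequence of random variables u_i(t,·) converges to u(t,·) in probability (i.e., in P-measure) as i → ∞. Then there exists a jointly measurable function ũ : T × Ω → ℝ such that for every t ∈ T, ũ(t,·) = u(t,·) P-almost surely. -/
open MeasureTheory Filter Set
open scoped ENNReal Topology

/-!
For each `t` the sequence `u i (t, ·)` is Cauchy in measure, so at each scale `2⁻ᵏ` one can pick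
an index beyond which all pairs are `2⁻ᵏ`-close outside a set of measure `2⁻ᵏ`. Taking the least
such index makes the choice measurable in `t`, because `t ↦ P {ω | ε ≤ |u m (t, ω) - u l (t, ω)|}`
is measurable by Fubini. Along these indices `u (n_k t) (t, ·)` converges almost surely by
Borel–Cantelli, and its pointwise limit (wherever it exists) is jointly measurable; it agrees
a.s. with the limit in probability `ulim (t, ·)`.
-/

section CauchyInMeasure

variable {α E : Type*} [MeasurableSpace α] [PseudoMetricSpace E] {μ : Measure α}

theorem MeasureTheory.TendstoInMeasure.eventually_measure_le_dist_le {f : ℕ → α → E}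
    {g : α → E} (hfg : TendstoInMeasure μ f atTop g) {ε : ℝ} (hε : 0 < ε) {δ : ℝ≥0∞}
    (hδ : 0 < δ) : ∀ᶠ n in atTop, ∀ m ≥ n, μ {x | ε ≤ dist (f n x) (f m x)} ≤ δ := by
  have hlim := tendstoInMeasure_iff_dist.mp hfg (ε / 2) (half_pos hε)
  obtain ⟨N, hN⟩ :=
    (ENNReal.tendsto_atTop_zero.mp hlim) (δ / 2) (ENNReal.half_pos hδ.ne')
  filter_upwards [eventually_ge_atTop N] with n hn m hm
  have hsub : {x | ε ≤ dist (f n x) (f m x)} ⊆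
      {x | ε / 2 ≤ dist (f n x) (g x)} ∪ {x | ε / 2 ≤ dist (f m x) (g x)} := by
    intro x hx
    by_contra hx'
    simp only [mem_union, mem_ofPred_eq, not_or, not_le] at hx hx'
    linarith [dist_triangle_right (f n x) (f m x) (g x)]
  calc μ {x | ε ≤ dist (f n x) (f m x)}
      ≤ μ {x | ε / 2 ≤ dist (f n x) (g x)} + μ {x | ε / 2 ≤ dist (f m x) (g x)} :=
        (measure_mono hsub).trans (measure_union_le _ _)
    _ ≤ δ / 2 + δ / 2 := add_le_add (hN n hn) (hN m (hn.trans hm))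
    _ = δ := ENNReal.add_halves δ

theorem ae_cauchySeq_of_measure_le_dist_succ_le {g : ℕ → α → E}
    (hg : ∀ k, μ {x | (2 : ℝ)⁻¹ ^ k ≤ dist (g k x) (g (k + 1) x)} ≤ 2⁻¹ ^ k) :
    ∀ᵐ x ∂μ, CauchySeq (g · x) := by
  have hsum : ∑' k, μ {x | (2 : ℝ)⁻¹ ^ k ≤ dist (g k x) (g (k + 1) x)} ≠ ∞ := by
    refine ne_top_of_le_ne_top ?_ (ENNReal.tsum_le_tsum hg)
    simp [ENNReal.tsum_geometric, ENNReal.one_sub_inv_two]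
  filter_upwards [ae_eventually_notMem hsum] with x hx
  obtain ⟨K, hK⟩ := eventually_atTop.mp hx
  rw [← cauchySeq_shift K]
  refine cauchySeq_of_le_geometric 2⁻¹ (2⁻¹ ^ K) (by norm_num) fun n => ?_
  have hclose := hK (n + K) le_add_self
  simp only [not_le] at hclose
  rw [mul_comm, ← pow_add, add_right_comm]
  exact hclose.le

end CauchyInMeasure

theorem measurable_measure_setOf_le_dist {α β E : Type*} [MeasurableSpace α]
    [MeasurableSpace β] [PseudoMetricSpace E] [MeasurableSpace E] [BorelSpace E]
    [SecondCountableTopology E] {ν : Measure β} [SFinite ν] {f g : α × β → E}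
    (hf : Measurable f) (hg : Measurable g) (ε : ℝ) :
    Measurable fun a => ν {b | ε ≤ dist (f (a, b)) (g (a, b))} :=
  measurable_measure_prodMk_left (measurableSet_le measurable_const (hf.dist hg))

theorem Measurable.apply_index {X E : Type*} [MeasurableSpace X] [MeasurableSpace E]
    {u : ℕ → X → E} (hu : ∀ n, Measurable (u n)) {ns : X → ℕ} (hns : Measurable ns) :
    Measurable fun x => u (ns x) x :=
  (measurable_from_prod_countable_left (f := fun q : X × ℕ => u q.2 q.1) hu).comp
    (measurable_id.prodMk hns)

def strictMonoMajorant (N : ℕ → ℕ) : ℕ → ℕ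
  | 0 => N 0
  | k + 1 => max (N (k + 1)) (strictMonoMajorant N k + 1)

theorem le_strictMonoMajorant (N : ℕ → ℕ) (k : ℕ) : N k ≤ strictMonoMajorant N k := by
  cases k <;> simp [strictMonoMajorant]

theorem strictMono_strictMonoMajorant (N : ℕ → ℕ) : StrictMono (strictMonoMajorant N) :=
  strictMono_nat_of_lt_succ fun k => by simp [strictMonoMajorant]

theorem Measurable.strictMonoMajorant {T : Type*} [MeasurableSpace T] {N : ℕ → T → ℕ}
    (hN : ∀ k, Measurable (N k)) (k : ℕ) :
    Measurable fun t => strictMonoMajorant (N · t) k := by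
  induction k with
  | zero => exact hN 0
  | succ k ih => exact (hN (k + 1)).max (ih.add_const 1)

theorem exists_measurable_strictMono_index {T : Type*} [MeasurableSpace T]
    {p : ℕ → T → ℕ → Prop} (hp_meas : ∀ k n, MeasurableSet {t | p k t n})
    (hp : ∀ k t, ∀ᶠ n in atTop, p k t n) :
    ∃ ns : ℕ → T → ℕ, (∀ k, Measurable (ns k)) ∧ (∀ t, StrictMono (ns · t)) ∧
      ∀ k t, p k t (ns k t) := by
  classical
  have hex : ∀ k t, ∃ n, ∀ m ≥ n, p k t m := fun k t => eventually_atTop.mp (hp k t)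
  have htail_meas : ∀ k n, MeasurableSet {t | ∀ m ≥ n, p k t m} := fun k n => by
    simp only [ofPred_forall]
    exact .iInter fun m => .iInter fun _ => hp_meas k m
  let N : ℕ → T → ℕ := fun k t => Nat.find (hex k t)
  have hN_meas : ∀ k, Measurable (N k) := fun k =>
    measurable_find (hex k) (htail_meas k)
  refine ⟨fun k t => strictMonoMajorant (N · t) k, Measurable.strictMonoMajorant hN_meas,
    fun t => strictMono_strictMonoMajorant _,
    fun k t => Nat.find_spec (hex k t) _ (le_strictMonoMajorant (N · t) k)⟩

/-- Let `(T, 𝒯)` be a measurable space and `(Ω, ℱ, P)` a probability space.  Let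
`u_i : T × Ω → ℝ` be jointly measurable and `u : T × Ω → ℝ` be such that for every
`t ∈ T` the random variables `u_i(t,·)` converge to `u(t,·)` in probability as
`i → ∞`.  Then there exists a jointly measurable `ũ : T × Ω → ℝ` such that for every
`t ∈ T`, `ũ(t,·) = u(t,·)` `P`-almost surely. -/
theorem statement9
    {T : Type*} [MeasurableSpace T]
    {Ω : Type*} [MeasurableSpace Ω] (P : Measure Ω) [IsProbabilityMeasure P]
    (u : ℕ → T × Ω → ℝ) (hu_meas : ∀ i, Measurable (u i))
    (ulim : T × Ω → ℝ)
    (hconv : ∀ t : T,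
      TendstoInMeasure P (fun i ω => u i (t, ω)) atTop (fun ω => ulim (t, ω))) :
    ∃ utilde : T × Ω → ℝ, Measurable utilde ∧
      ∀ t : T, ∀ᵐ ω ∂P, utilde (t, ω) = ulim (t, ω) := by
  obtain ⟨ns, hns_meas, hns_mono, hns⟩ := exists_measurable_strictMono_index
    (p := fun k t n => ∀ m ≥ n, P {ω | (2 : ℝ)⁻¹ ^ k ≤ dist (u n (t, ω)) (u m (t, ω))} ≤ 2⁻¹ ^ k)
    (fun k n => by
      simp only [ofPred_forall]
      exact .iInter fun m => .iInter fun _ => measurableSet_le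
        (measurable_measure_setOf_le_dist (hu_meas n) (hu_meas m) _) measurable_const)
    (fun k t => (hconv t).eventually_measure_le_dist_le (by positivity)
      (ENNReal.pow_pos (by norm_num) k))
  set v : ℕ → T × Ω → ℝ := fun k p => u (ns k p.1) p
  have hv_meas : ∀ k, Measurable (v k) := fun k =>
    Measurable.apply_index hu_meas ((hns_meas k).comp measurable_fst)
  refine ⟨fun p => limUnder atTop (v · p),
    (StronglyMeasurable.limUnder fun k => (hv_meas k).stronglyMeasurable).measurable, fun t => ?_⟩
  have hv_ae : ∀ᵐ ω ∂P, Tendsto (v · (t, ω)) atTop (𝓝 (limUnder atTop (v · (t, ω)))) := by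
    filter_upwards [ae_cauchySeq_of_measure_le_dist_succ_le
      fun k => hns k t _ ((hns_mono t).monotone k.le_succ)] with ω hω
    exact tendsto_nhds_limUnder (cauchySeq_tendsto_of_complete hω)
  exact tendstoInMeasure_ae_unique
    (tendstoInMeasure_of_tendsto_ae
      (fun k => ((hv_meas k).comp measurable_prodMk_left).aestronglyMeasurable) hv_ae)
    ((hconv t).comp (ns := (ns · t)) (hns_mono t).tendsto_atTop)
end

section
/- If in addition p is jointly continuous on (0,∞) × X × X and u₀ : X → ℝ is bounded and continuous, then the function (t,x) ↦ ∫_X p(t,x,y) u₀(y) dm(y) is well defined (the integral is finite) and continuous on (0,∞) × X. -/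
open MeasureTheory Set

lemma aux_summable (df c α : ℝ) (hdf : 0 < df) (hc : 0 < c) (hα : 0 < α) :
    Summable (fun n : ℕ => ((n : ℝ) + 1) ^ df * Real.exp (-(c * (n : ℝ) ^ α))) := by
  obtain ⟨k, hk⟩ := exists_nat_gt ((df + 2) / α)
  have hk' : df + 2 < α * k := by
    rw [div_lt_iff₀ hα] at hk; linarith
  rw [← summable_nat_add_iff 1]
  have hsum : Summable (fun n : ℕ => (2 ^ df * (Nat.factorial k : ℝ) / c ^ k) * ((n : ℝ) + 1) ^ (df - α * (k:ℝ))) := by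
    apply Summable.mul_left
    have h1 : Summable (fun n : ℕ => ((n : ℝ)) ^ (df - α * (k:ℝ))) :=
      Real.summable_nat_rpow.2 (by linarith)
    have h2 := (summable_nat_add_iff 1).2 h1
    refine h2.congr fun n => ?_
    push_cast
    ring_nf
  refine Summable.of_nonneg_of_le (fun n => ?_) (fun n => ?_) hsum
  · positivity
  · set N : ℝ := (n : ℝ) + 1 with hN
    have hN1 : (1 : ℝ) ≤ N := by rw [hN]; linarith [Nat.cast_nonneg (α := ℝ) n]
    have hN0 : (0 : ℝ) < N := by linarith
    have cast1 : ((n + 1 : ℕ) : ℝ) = N := by push_cast; rfl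
    rw [cast1]
    have hb1 : (N + 1) ^ df ≤ 2 ^ df * N ^ df := by
      rw [← Real.mul_rpow (by norm_num) hN0.le]
      exact Real.rpow_le_rpow (by linarith) (by linarith) hdf.le
    have hb2 : Real.exp (-(c * N ^ α)) ≤ (Nat.factorial k : ℝ) / c ^ k * N ^ (-(α * (k:ℝ))) := by
      have hx : (0 : ℝ) ≤ c * N ^ α := by positivity
      have hexp : (c * N ^ α) ^ k / (Nat.factorial k : ℝ) ≤ Real.exp (c * N ^ α) :=
        Real.pow_div_factorial_le_exp (c * N ^ α) hx k
      have hNαk : (N ^ α) ^ k = N ^ (α * (k:ℝ)) := by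
        rw [← Real.rpow_natCast (N ^ α) k, ← Real.rpow_mul hN0.le]
      have hpos : (0 : ℝ) < (c * N ^ α) ^ k / (Nat.factorial k : ℕ) := by positivity
      rw [Real.exp_neg]
      calc (Real.exp (c * N ^ α))⁻¹ ≤ ((c * N ^ α) ^ k / (Nat.factorial k : ℝ))⁻¹ := by
            apply inv_anti₀ hpos hexp
        _ = (Nat.factorial k : ℝ) / c ^ k * N ^ (-(α * (k:ℝ))) := by
            rw [mul_pow, hNαk, Real.rpow_neg hN0.le]
            field_simp
    calc (N + 1) ^ df * Real.exp (-(c * N ^ α))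
        ≤ (2 ^ df * N ^ df) * ((Nat.factorial k : ℝ) / c ^ k * N ^ (-(α * (k:ℝ)))) := by
          apply mul_le_mul hb1 hb2 (Real.exp_pos _).le (by positivity)
      _ = (2 ^ df * (Nat.factorial k : ℝ) / c ^ k) * N ^ (df - α * (k:ℝ)) := by
          rw [sub_eq_add_neg, Real.rpow_add hN0]
          ring

lemma integrable_exp_dist {X : Type*} [MetricSpace X] [MeasurableSpace X] [BorelSpace X]
    (m : Measure X) (Cm df : ℝ) (hCm : 0 < Cm) (hdf : 0 < df)
    (hball : ∀ (x : X) (r : ℝ), 0 < r →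
      m (Metric.closedBall x r) ≤ ENNReal.ofReal (Cm * r ^ df))
    (c α : ℝ) (hc : 0 < c) (hα : 0 < α) (x₀ : X) :
    Integrable (fun y => Real.exp (-(c * dist x₀ y ^ α))) m := by
  have hcont : Continuous (fun y : X => Real.exp (-(c * dist x₀ y ^ α))) := by
    apply Real.continuous_exp.comp
    apply Continuous.neg
    apply Continuous.mul continuous_const
    exact (continuous_const.dist continuous_id).rpow_const (fun y => Or.inr hα.le)
  refine ⟨hcont.aestronglyMeasurable, ?_⟩
  rw [hasFiniteIntegral_iff_ofReal (ae_of_all _ fun y => (Real.exp_pos _).le)]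
  set s : ℕ → Set X := fun n => Metric.closedBall x₀ ((n : ℝ) + 1) \ Metric.ball x₀ (n : ℝ)
    with hs
  have hcover : (⋃ n, s n) = univ := by
    ext y
    simp only [mem_iUnion, mem_univ, iff_true, hs, mem_diff, Metric.mem_closedBall,
      Metric.mem_ball, not_lt]
    refine ⟨⌊dist y x₀⌋₊, (Nat.lt_floor_add_one _).le, Nat.floor_le dist_nonneg⟩
  calc ∫⁻ y, ENNReal.ofReal (Real.exp (-(c * dist x₀ y ^ α))) ∂m
      = ∫⁻ y in ⋃ n, s n, ENNReal.ofReal (Real.exp (-(c * dist x₀ y ^ α))) ∂m := by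
        rw [hcover, Measure.restrict_univ]
    _ ≤ ∑' n : ℕ, ∫⁻ y in s n, ENNReal.ofReal (Real.exp (-(c * dist x₀ y ^ α))) ∂m :=
        lintegral_iUnion_le _ _
    _ ≤ ∑' n : ℕ, ENNReal.ofReal (Cm * ((n : ℝ) + 1) ^ df * Real.exp (-(c * (n : ℝ) ^ α))) := by
        refine ENNReal.tsum_le_tsum fun n => ?_
        have hmeas : MeasurableSet (s n) :=
          Metric.isClosed_closedBall.measurableSet.diff Metric.isOpen_ball.measurableSet
        calc ∫⁻ y in s n, ENNReal.ofReal (Real.exp (-(c * dist x₀ y ^ α))) ∂m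
            ≤ ∫⁻ _ in s n, ENNReal.ofReal (Real.exp (-(c * (n : ℝ) ^ α))) ∂m := by
              refine setLIntegral_mono' hmeas fun y hy => ?_
              apply ENNReal.ofReal_le_ofReal
              apply Real.exp_le_exp.2
              simp only [neg_le_neg_iff]
              have hd : (n : ℝ) ≤ dist x₀ y := by
                have := hy.2
                simpa [Metric.mem_ball, not_lt, dist_comm] using this
              exact mul_le_mul_of_nonneg_left
                (Real.rpow_le_rpow (Nat.cast_nonneg n) hd hα.le) hc.le
          _ = ENNReal.ofReal (Real.exp (-(c * (n : ℝ) ^ α))) * m (s n) :=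
              setLIntegral_const _ _
          _ ≤ ENNReal.ofReal (Real.exp (-(c * (n : ℝ) ^ α))) *
                ENNReal.ofReal (Cm * ((n : ℝ) + 1) ^ df) := by
              refine mul_le_mul_right ?_ _
              refine le_trans (measure_mono diff_subset) ?_
              exact hball x₀ _ (by positivity)
          _ = ENNReal.ofReal (Cm * ((n : ℝ) + 1) ^ df * Real.exp (-(c * (n : ℝ) ^ α))) := by
              rw [← ENNReal.ofReal_mul (Real.exp_pos _).le, mul_comm]
    _ < ⊤ := by
        have hsum : Summable (fun n : ℕ => Cm * (((n : ℝ) + 1) ^ df *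
            Real.exp (-(c * (n : ℝ) ^ α)))) :=
          (aux_summable df c α hdf hc hα).mul_left Cm
        have hnn : ∀ n : ℕ, 0 ≤ Cm * (((n : ℝ) + 1) ^ df * Real.exp (-(c * (n : ℝ) ^ α))) :=
          fun n => by positivity
        have := ENNReal.ofReal_tsum_of_nonneg hnn hsum
        rw [show (fun n : ℕ => ENNReal.ofReal (Cm * ((n : ℝ) + 1) ^ df *
            Real.exp (-(c * (n : ℝ) ^ α)))) = fun n : ℕ => ENNReal.ofReal (Cm * (((n : ℝ) + 1) ^ df *
            Real.exp (-(c * (n : ℝ) ^ α)))) from funext fun n => by rw [mul_assoc]]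
        rw [← this]
        exact ENNReal.ofReal_lt_top

lemma shift_bound (c α D D₀ : ℝ) (hc : 0 < c) (hα : 0 < α) (hD : 0 ≤ D) (hD₀ : 0 ≤ D₀)
    (h : D₀ ≤ D + 1) :
    Real.exp (-(c * D ^ α)) ≤ Real.exp c * Real.exp (-(c / 2 ^ α * D₀ ^ α)) := by
  rw [← Real.exp_add, Real.exp_le_exp]
  have h2α : (0 : ℝ) < 2 ^ α := Real.rpow_pos_of_pos two_pos α
  have hDα : 0 ≤ D ^ α := Real.rpow_nonneg hD α
  rcases le_or_gt D₀ 2 with h2 | h2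
  · have : c / 2 ^ α * D₀ ^ α ≤ c := by
      rw [div_mul_eq_mul_div, div_le_iff₀ h2α]
      exact mul_le_mul_of_nonneg_left (Real.rpow_le_rpow hD₀ h2 hα.le) hc.le
    nlinarith
  · have hhalf : D₀ / 2 ≤ D := by linarith
    have : c / 2 ^ α * D₀ ^ α ≤ c * D ^ α := by
      have h1 : (D₀ / 2) ^ α ≤ D ^ α := Real.rpow_le_rpow (by linarith) hhalf hα.le
      rw [Real.div_rpow hD₀ two_pos.le] at h1
      calc c / 2 ^ α * D₀ ^ α = c * (D₀ ^ α / 2 ^ α) := by ring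
        _ ≤ c * D ^ α := mul_le_mul_of_nonneg_left h1 hc.le
    nlinarith [hc.le]

/-- Context: `(X,d)` a metric space, `m` a Borel measure with `m(B(x,r)) ≤ C_m r^{d_f}`
for all `x` and `r > 0` (`C_m, d_f > 0`, closed balls); `d_w > 0`, `d_J > 1`,
`d_s = 2 d_f / d_w`; `p : (0,∞) × X × X → [0,∞)` a measurable kernel with
`p(t,x,y) ≤ c₂ t^{−d_s/2} exp(−c₃ (d(x,y)^{d_w}/t)^{1/(d_J−1)})` (`c₂, c₃ > 0`).

Claim: if in addition `p` is jointly continuous on `(0,∞) × X × X` and `u₀ : X → ℝ`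
is bounded and continuous, then `(t,x) ↦ ∫_X p(t,x,y) u₀(y) dm(y)` is well defined
(the integral is finite) and continuous on `(0,∞) × X`. -/
theorem statement11
    {X : Type*} [MetricSpace X] [MeasurableSpace X] [BorelSpace X]
    (m : Measure X)
    (Cm df dw dJ ds : ℝ)
    (hCm : 0 < Cm) (hdf : 0 < df) (hdw : 0 < dw) (hdJ : 1 < dJ)
    (hds : ds = 2 * df / dw)
    (hball : ∀ (x : X) (r : ℝ), 0 < r →
      m (Metric.closedBall x r) ≤ ENNReal.ofReal (Cm * r ^ df))
    (p : ℝ → X → X → ℝ)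
    (hp_meas : Measurable fun q : ℝ × X × X => p q.1 q.2.1 q.2.2)
    (c₂ c₃ : ℝ) (hc₂ : 0 < c₂) (hc₃ : 0 < c₃)
    (hp_nonneg : ∀ t > (0 : ℝ), ∀ x y : X, 0 ≤ p t x y)
    (hp_ub : ∀ t > (0 : ℝ), ∀ x y : X,
      p t x y ≤ c₂ * t ^ (-ds / 2) *
        Real.exp (-c₃ * (dist x y ^ dw / t) ^ (1 / (dJ - 1))))
    (hp_cont : ContinuousOn (fun q : ℝ × X × X => p q.1 q.2.1 q.2.2)
      (Set.Ioi (0 : ℝ) ×ˢ (Set.univ : Set (X × X))))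
    (u₀ : X → ℝ) (hu₀_cont : Continuous u₀)
    (Cu : ℝ) (hu₀_bdd : ∀ y : X, |u₀ y| ≤ Cu) :
    (∀ t > (0 : ℝ), ∀ x : X, Integrable (fun y => p t x y * u₀ y) m) ∧
    ContinuousOn (fun q : ℝ × X => ∫ y, p q.1 q.2 y * u₀ y ∂m)
      (Set.Ioi (0 : ℝ) ×ˢ (Set.univ : Set X)) := by
  have hdJ1 : 0 < dJ - 1 := by linarith
  have hβ : 0 < 1 / (dJ - 1) := by positivity
  set β : ℝ := 1 / (dJ - 1) with hβdef
  set α : ℝ := dw * β with hαdef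
  have hα : 0 < α := by positivity
  set Cu' : ℝ := max Cu 0 with hCu'def
  have hCu' : 0 ≤ Cu' := le_max_right _ _
  have hu' : ∀ y, |u₀ y| ≤ Cu' := fun y => (hu₀_bdd y).trans (le_max_left _ _)
  have hds0 : 0 < ds := by rw [hds]; positivity
  have hmeasF : ∀ t : ℝ, ∀ x : X,
      AEStronglyMeasurable (fun y => p t x y * u₀ y) m := by
    intro t x
    have h1 : Measurable fun y : X => (t, x, y) :=
      measurable_const.prodMk (measurable_const.prodMk measurable_id)
    exact ((hp_meas.comp h1).mul hu₀_cont.measurable).aestronglyMeasurable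
  have key : ∀ t : ℝ, 0 < t → ∀ T : ℝ, t ≤ T → ∀ x y : X,
      p t x y ≤ c₂ * t ^ (-ds / 2) * Real.exp (-(c₃ / T ^ β * dist x y ^ α)) := by
    intro t ht T hT x y
    have hT0 : 0 < T := lt_of_lt_of_le ht hT
    refine (hp_ub t ht x y).trans ?_
    refine mul_le_mul_of_nonneg_left ?_ (by positivity)
    rw [Real.exp_le_exp]
    have hd0 : (0 : ℝ) ≤ dist x y := dist_nonneg
    have e1 : (dist x y ^ dw / t) ^ β = dist x y ^ α / t ^ β := by
      rw [Real.div_rpow (Real.rpow_nonneg hd0 dw) ht.le, ← Real.rpow_mul hd0, hαdef]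
    rw [e1]
    have h5 : c₃ / T ^ β ≤ c₃ / t ^ β := by
      apply div_le_div_of_nonneg_left hc₃.le (Real.rpow_pos_of_pos ht β)
      exact Real.rpow_le_rpow ht.le hT hβ.le
    have h6 : c₃ / T ^ β * dist x y ^ α ≤ c₃ / t ^ β * dist x y ^ α :=
      mul_le_mul_of_nonneg_right h5 (Real.rpow_nonneg hd0 α)
    have e2 : -c₃ * (dist x y ^ α / t ^ β) = -(c₃ / t ^ β * dist x y ^ α) := by ring
    linarith [e2.le]
  have hint : ∀ t > (0 : ℝ), ∀ x : X, Integrable (fun y => p t x y * u₀ y) m := by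
    intro t ht x
    have hc' : 0 < c₃ / t ^ β := by positivity
    have hg := (integrable_exp_dist m Cm df hCm hdf hball (c₃ / t ^ β) α hc' hα x).const_mul
      (c₂ * t ^ (-ds / 2) * Cu')
    refine hg.mono (hmeasF t x) (ae_of_all _ fun y => ?_)
    rw [Real.norm_eq_abs, Real.norm_eq_abs, abs_mul, abs_of_nonneg (hp_nonneg t ht x y),
      abs_of_nonneg (by positivity : (0:ℝ) ≤ c₂ * t ^ (-ds / 2) * Cu' *
        Real.exp (-(c₃ / t ^ β * dist x y ^ α)))]
    calc p t x y * |u₀ y|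
        ≤ (c₂ * t ^ (-ds / 2) * Real.exp (-(c₃ / t ^ β * dist x y ^ α))) * Cu' := by
          apply mul_le_mul (key t ht t le_rfl x y) (hu' y) (abs_nonneg _) (by positivity)
      _ = c₂ * t ^ (-ds / 2) * Cu' * Real.exp (-(c₃ / t ^ β * dist x y ^ α)) := by ring
  refine ⟨hint, ?_⟩
  intro q hq
  obtain ⟨t₀, x₀⟩ := q
  have ht₀ : 0 < t₀ := hq.1
  apply ContinuousAt.continuousWithinAt
  set c' : ℝ := c₃ / (2 * t₀) ^ β with hc'def
  have hc'0 : 0 < c' := by positivity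
  set c'' : ℝ := c' / 2 ^ α with hc''def
  have hc''0 : 0 < c'' := by positivity
  set K : ℝ := c₂ * (t₀ / 2) ^ (-ds / 2) * Cu' * Real.exp c' with hKdef
  apply continuousAt_of_dominated (bound := fun y => K * Real.exp (-(c'' * dist x₀ y ^ α)))
  · exact Filter.Eventually.of_forall fun q => hmeasF q.1 q.2
  · have hN : Ioo (t₀ / 2) (2 * t₀) ×ˢ Metric.ball x₀ 1 ∈ nhds (t₀, x₀) := by
      apply (isOpen_Ioo.prod Metric.isOpen_ball).mem_nhds
      exact ⟨⟨by linarith, by linarith⟩, Metric.mem_ball_self one_pos⟩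
    filter_upwards [hN] with q hq'
    refine ae_of_all _ fun y => ?_
    obtain ⟨⟨ht1, ht2⟩, hx⟩ := hq'
    have ht : 0 < q.1 := lt_trans (by linarith) ht1
    rw [Real.norm_eq_abs, abs_mul, abs_of_nonneg (hp_nonneg q.1 ht q.2 y)]
    have h1 := key q.1 ht (2 * t₀) ht2.le q.2 y
    have h3 : q.1 ^ (-ds / 2) ≤ (t₀ / 2) ^ (-ds / 2) :=
      Real.rpow_le_rpow_of_nonpos (by linarith) ht1.le (by linarith)
    have h4 : Real.exp (-(c' * dist q.2 y ^ α)) ≤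
        Real.exp c' * Real.exp (-(c'' * dist x₀ y ^ α)) := by
      rw [hc''def]
      apply shift_bound c' α (dist q.2 y) (dist x₀ y) hc'0 hα dist_nonneg dist_nonneg
      calc dist x₀ y ≤ dist x₀ q.2 + dist q.2 y := dist_triangle _ _ _
        _ ≤ dist q.2 y + 1 := by rw [dist_comm]; linarith [Metric.mem_ball.1 hx]
    calc p q.1 q.2 y * |u₀ y|
        ≤ (c₂ * q.1 ^ (-ds / 2) * Real.exp (-(c' * dist q.2 y ^ α))) * Cu' := by
          apply mul_le_mul h1 (hu' y) (abs_nonneg _) (by positivity)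
      _ ≤ (c₂ * (t₀ / 2) ^ (-ds / 2) *
            (Real.exp c' * Real.exp (-(c'' * dist x₀ y ^ α)))) * Cu' := by
          apply mul_le_mul_of_nonneg_right _ hCu'
          apply mul_le_mul (mul_le_mul_of_nonneg_left h3 hc₂.le) h4 (Real.exp_pos _).le
            (by positivity)
      _ = K * Real.exp (-(c'' * dist x₀ y ^ α)) := by rw [hKdef]; ring
  · exact (integrable_exp_dist m Cm df hCm hdf hball c'' α hc''0 hα x₀).const_mul K
  · refine ae_of_all _ fun y => ?_
    have hopen : IsOpen (Set.Ioi (0 : ℝ) ×ˢ (Set.univ : Set (X × X))) :=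
      isOpen_Ioi.prod isOpen_univ
    have h1 : ContinuousAt (fun r : ℝ × X × X => p r.1 r.2.1 r.2.2) (t₀, x₀, y) :=
      hp_cont.continuousAt (hopen.mem_nhds ⟨ht₀, mem_univ _⟩)
    have h2 : ContinuousAt (fun q : ℝ × X => (q.1, q.2, y)) (t₀, x₀) :=
      (continuous_fst.prodMk (continuous_snd.prodMk continuous_const)).continuousAt
    have h3 : ContinuousAt (fun q : ℝ × X => p q.1 q.2 y) (t₀, x₀) :=
      ContinuousAt.comp (g := fun r : ℝ × X × X => p r.1 r.2.1 r.2.2)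
        (f := fun q : ℝ × X => (q.1, q.2, y)) h1 h2
    exact h3.mul continuousAt_const
end

section
/- There exists a unique bounded measurable function u : [0,T] × X → ℝ satisfying u(t,x) = v(t,x) + ∫₀^t ( ∫_X p(t−s, x, y) f(s, y, u(s,y)) dm(y) ) ds for all (t,x) ∈ [0,T] × X, and this u is continuous on [0,T] × X. -/
/-!
The solution is the fixed point of the Picard map `w ↦ v + ∫₀ᵗ ∫ p(t-s,x,y) f(s,y,w(s,y)) dm(y) ds`.
Since each `p(t,x,·)` is a probability density and `f` is `K_f`-Lipschitz in its last variable,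
the `n`-th iterate of this Volterra map contracts bounded functions by `(K_f t)ⁿ / n!`; this gives
convergence of the Picard iterates and uniqueness among bounded solutions, with no smallness
condition on `T`. The fixed point is continuous because the Duhamel term is: by Scheffé's lemma
the densities `p(t,x,·)` depend continuously on `(t,x)` in `L¹`, and dominated convergence in `s`
does the rest.
-/

open MeasureTheory Set Filter Topology Function

section ProbabilityDensity

variable {Y : Type*} [MeasurableSpace Y] {m : Measure Y} {k k₀ g : Y → ℝ} {M : ℝ}

lemma abs_integral_mul_le (hk0 : ∀ y, 0 ≤ k y) (hk1 : ∫ y, k y ∂m = 1)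
    (hgM : ∀ y, |g y| ≤ M) : |∫ y, k y * g y ∂m| ≤ M := by
  calc |∫ y, k y * g y ∂m| = ‖∫ y, k y * g y ∂m‖ := (Real.norm_eq_abs _).symm
    _ ≤ ∫ y, M * k y ∂m :=
        norm_integral_le_of_norm_le ((integrable_of_integral_eq_one hk1).const_mul M)
          (ae_of_all _ fun y => by
            rw [Real.norm_eq_abs, abs_mul, abs_of_nonneg (hk0 y), mul_comm M]
            exact mul_le_mul_of_nonneg_left (hgM y) (hk0 y))
    _ = M := by rw [integral_const_mul, hk1, mul_one]

lemma integrable_mul_of_abs_le (hk1 : ∫ y, k y ∂m = 1) (hg : AEStronglyMeasurable g m)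
    (hgM : ∀ y, |g y| ≤ M) : Integrable (fun y => k y * g y) m :=
  (integrable_of_integral_eq_one hk1).mul_bdd hg (ae_of_all _ hgM)

lemma abs_sub_eq_sub_add_two_mul_max (a b : ℝ) : |a - b| = a - b + 2 * max (b - a) 0 := by
  rcases le_total a b with h | h
  · rw [abs_of_nonpos (by linarith), max_eq_left (by linarith)]; ring
  · rw [abs_of_nonneg (by linarith), max_eq_right (by linarith)]; ring

variable {ι : Type*} {l : Filter ι} [l.IsCountablyGenerated] {k : ι → Y → ℝ}

/-- Scheffé's lemma. -/
theorem tendsto_integral_abs_sub_of_tendsto (hk0 : ∀ᶠ i in l, ∀ y, 0 ≤ k i y)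
    (hk1 : ∀ᶠ i in l, ∫ y, k i y ∂m = 1) (hk₀0 : ∀ y, 0 ≤ k₀ y) (hk₀1 : ∫ y, k₀ y ∂m = 1)
    (hlim : ∀ y, Tendsto (fun i => k i y) l (𝓝 (k₀ y))) :
    Tendsto (fun i => ∫ y, |k i y - k₀ y| ∂m) l (𝓝 0) := by
  have hk₀ := integrable_of_integral_eq_one hk₀1
  have hdefect : ∀ i, ∫ y, k i y ∂m = 1 → Integrable (fun y => max (k₀ y - k i y) 0) m :=
    fun i hi => (hk₀.sub (integrable_of_integral_eq_one hi)).pos_part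
  have hdef : Tendsto (fun i => ∫ y, max (k₀ y - k i y) 0 ∂m) l (𝓝 0) := by
    have := tendsto_integral_filter_of_dominated_convergence (μ := m) k₀
      (hk1.mono fun i hi => (hdefect i hi).aestronglyMeasurable)
      (hk0.mono fun i hi => ae_of_all _ fun y => by
        rw [Real.norm_eq_abs, abs_of_nonneg (le_max_right _ _)]
        exact max_le (by linarith [hi y]) (hk₀0 y))
      hk₀ (ae_of_all _ fun y => by
        simpa using (tendsto_const_nhds.sub (hlim y)).max (tendsto_const_nhds (x := (0 : ℝ))))
    simpa using this
  refine ((hdef.const_mul 2).congr' ?_).trans (by simp)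
  filter_upwards [hk1] with i hi
  have hki := integrable_of_integral_eq_one hi
  simp_rw [abs_sub_eq_sub_add_two_mul_max (k i _)]
  rw [integral_add (f := fun y => k i y - k₀ y) (hki.sub hk₀) ((hdefect i hi).const_mul 2),
    integral_sub hki hk₀, integral_const_mul, hi, hk₀1, sub_self, zero_add]

theorem tendsto_integral_mul_of_tendsto (hk0 : ∀ᶠ i in l, ∀ y, 0 ≤ k i y)
    (hk1 : ∀ᶠ i in l, ∫ y, k i y ∂m = 1) (hk₀0 : ∀ y, 0 ≤ k₀ y) (hk₀1 : ∫ y, k₀ y ∂m = 1)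
    (hlim : ∀ y, Tendsto (fun i => k i y) l (𝓝 (k₀ y)))
    (hg : AEStronglyMeasurable g m) (hgM : ∀ y, |g y| ≤ M) :
    Tendsto (fun i => ∫ y, k i y * g y ∂m) l (𝓝 (∫ y, k₀ y * g y ∂m)) := by
  rw [tendsto_iff_norm_sub_tendsto_zero]
  refine squeeze_zero' (Eventually.of_forall fun i => norm_nonneg _) ?_
    (by simpa using (tendsto_integral_abs_sub_of_tendsto hk0 hk1 hk₀0 hk₀1 hlim).const_mul M)
  filter_upwards [hk1] with i hi
  have hki := integrable_of_integral_eq_one hi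
  have hk₀ := integrable_of_integral_eq_one hk₀1
  rw [← integral_sub (integrable_mul_of_abs_le hi hg hgM) (integrable_mul_of_abs_le hk₀1 hg hgM),
    ← integral_const_mul]
  refine norm_integral_le_of_norm_le ((hki.sub hk₀).abs.const_mul M) (ae_of_all _ fun y => ?_)
  rw [← sub_mul, Real.norm_eq_abs, abs_mul, mul_comm]
  exact mul_le_mul_of_nonneg_right (hgM y) (abs_nonneg _)

end ProbabilityDensity

section Volterra

variable {X : Type*} {T K : ℝ} {P : (ℝ → X → ℝ) → Prop} {Φ : (ℝ → X → ℝ) → ℝ → X → ℝ}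

/-- The Lipschitz estimate of a Volterra integral operator on the strip `[0, T] × X`, in the form
that iterates to the bound `C (K t)ⁿ / n!`. -/
def VolterraLipschitz (T K : ℝ) (P : (ℝ → X → ℝ) → Prop) (Φ : (ℝ → X → ℝ) → ℝ → X → ℝ) :
    Prop :=
  ∀ w w', P w → P w' → ∀ (n : ℕ) (c : ℝ),
    (∀ s ∈ Icc 0 T, ∀ y, |w s y - w' s y| ≤ c * s ^ n) →
    ∀ t ∈ Icc 0 T, ∀ x, |Φ w t x - Φ w' t x| ≤ K * c * t ^ (n + 1) / (n + 1)

namespace VolterraLipschitz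

lemma abs_sub_le_pow_div_factorial (hΦ : VolterraLipschitz T K P Φ)
    {a b : ℕ → ℝ → X → ℝ} (ha : ∀ n, P (a n)) (hb : ∀ n, P (b n))
    (ha_succ : ∀ n, ∀ t ∈ Icc 0 T, ∀ x, a (n + 1) t x = Φ (a n) t x)
    (hb_succ : ∀ n, ∀ t ∈ Icc 0 T, ∀ x, b (n + 1) t x = Φ (b n) t x)
    {C : ℝ} (h₀ : ∀ t ∈ Icc 0 T, ∀ x, |a 0 t x - b 0 t x| ≤ C) :
    ∀ n, ∀ t ∈ Icc 0 T, ∀ x, |a n t x - b n t x| ≤ C * (K * t) ^ n / n.factorial := by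
  intro n
  induction n with
  | zero => simpa using h₀
  | succ n ih =>
    intro t ht x
    rw [ha_succ n t ht x, hb_succ n t ht x]
    refine (hΦ _ _ (ha n) (hb n) n (C * K ^ n / n.factorial)
      (fun s hs y => (ih s hs y).trans_eq (by ring)) t ht x).trans_eq ?_
    rw [Nat.factorial_succ]
    push_cast
    field_simp
    ring

lemma eqOn_of_isFixedPt (hΦ : VolterraLipschitz T K P Φ) {u u' : ℝ → X → ℝ}
    (hu : P u) (hu' : P u') (hu_bdd : ∃ C, ∀ t ∈ Icc 0 T, ∀ x, |u t x| ≤ C)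
    (hu'_bdd : ∃ C, ∀ t ∈ Icc 0 T, ∀ x, |u' t x| ≤ C)
    (hu_fix : ∀ t ∈ Icc 0 T, ∀ x, Φ u t x = u t x)
    (hu'_fix : ∀ t ∈ Icc 0 T, ∀ x, Φ u' t x = u' t x) :
    ∀ t ∈ Icc 0 T, ∀ x, u t x = u' t x := by
  obtain ⟨C, hC⟩ := hu_bdd
  obtain ⟨C', hC'⟩ := hu'_bdd
  intro t ht x
  have hbound := hΦ.abs_sub_le_pow_div_factorial (a := fun _ => u) (b := fun _ => u')
    (fun _ => hu) (fun _ => hu') (fun _ t ht x => (hu_fix t ht x).symm)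
    (fun _ t ht x => (hu'_fix t ht x).symm)
    (fun t ht x => (abs_sub _ _).trans (add_le_add (hC t ht x) (hC' t ht x)))
  have hlim : Tendsto (fun n => (C + C') * (K * t) ^ n / n.factorial) atTop (𝓝 0) := by
    simpa [mul_div_assoc] using
      (FloorSemiring.tendsto_pow_div_factorial_atTop (K * t)).const_mul (C + C')
  exact sub_eq_zero.1 <| abs_nonpos_iff.1 <|
    ge_of_tendsto hlim (Eventually.of_forall fun n => hbound n t ht x)

lemma dist_iterate_succ_le (hΦ : VolterraLipschitz T K P Φ) (hK : 0 ≤ K) (hP₀ : P 0)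
    (hP : ∀ w, P w → P (Φ w)) (hΦ_supp : ∀ w t x, t ∉ Icc 0 T → Φ w t x = 0) {C : ℝ}
    (hC : ∀ t ∈ Icc 0 T, ∀ x, |Φ 0 t x| ≤ C) (n : ℕ) (t : ℝ) (x : X) :
    dist (Φ^[n] 0 t x) (Φ^[n + 1] 0 t x) ≤ |C| * ((K * |T|) ^ n / n.factorial) := by
  by_cases ht : t ∈ Icc 0 T
  · have h := hΦ.abs_sub_le_pow_div_factorial (a := fun n => Φ^[n + 1] 0) (b := fun n => Φ^[n] 0)
      (fun n => Iterate.rec P hP₀ hP (n + 1)) (Iterate.rec P hP₀ hP)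
      (fun n t _ x => by rw [iterate_succ_apply']) (fun n t _ x => by rw [iterate_succ_apply'])
      (fun t ht x => by simpa using (hC t ht x).trans (le_abs_self C)) n t ht x
    rw [dist_comm, Real.dist_eq, ← mul_div_assoc]
    refine h.trans ?_
    gcongr
    · exact mul_nonneg hK ht.1
    · exact ht.2.trans (le_abs_self T)
  · have h_off : ∀ n, Φ^[n] 0 t x = 0 := fun n => by
      cases n with
      | zero => rfl
      | succ n => rw [iterate_succ_apply']; exact hΦ_supp _ t x ht
    rw [h_off, h_off, dist_self]
    have := abs_nonneg T
    positivity

/-- Picard iteration from `0`. The support condition makes the iterates vanish off the strip, so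
that they converge everywhere and `P` can be passed to the limit. -/
lemma exists_isFixedPt (hΦ : VolterraLipschitz T K P Φ) (hK : 0 ≤ K) (hP₀ : P 0)
    (hP : ∀ w, P w → P (Φ w))
    (hP_lim : ∀ (U : ℕ → ℝ → X → ℝ) (u : ℝ → X → ℝ), (∀ n, P (U n)) →
      Tendsto U atTop (𝓝 u) → P u)
    (hΦ_supp : ∀ w t x, t ∉ Icc 0 T → Φ w t x = 0)
    (hΦ₀ : ∃ C, ∀ t ∈ Icc 0 T, ∀ x, |Φ 0 t x| ≤ C) :
    ∃ u, P u ∧ ∀ t ∈ Icc 0 T, ∀ x, Φ u t x = u t x := by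
  obtain ⟨C, hC⟩ := hΦ₀
  set d : ℕ → ℝ := fun n => |C| * ((K * |T|) ^ n / n.factorial)
  have hd : Summable d := (Real.summable_pow_div_factorial (K * |T|)).mul_left |C|
  have hstep := hΦ.dist_iterate_succ_le hK hP₀ hP hΦ_supp hC
  have hconv : ∀ t x, ∃ r, Tendsto (fun n => Φ^[n] 0 t x) atTop (𝓝 r) := fun t x =>
    cauchySeq_tendsto_of_complete (cauchySeq_of_dist_le_of_summable d (hstep · t x) hd)
  choose u hu using hconv
  have htail : ∀ n t x, |Φ^[n] 0 t x - u t x| ≤ ∑' k, d (k + n) := fun n t x => by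
    rw [← Real.dist_eq]
    simpa only [add_comm] using dist_le_tsum_of_dist_le_of_tendsto d (hstep · t x) hd (hu t x) n
  have hPu : P u := hP_lim _ u (Iterate.rec P hP₀ hP)
    (tendsto_pi_nhds.2 fun t => tendsto_pi_nhds.2 (hu t))
  refine ⟨u, hPu, fun t ht x => tendsto_nhds_unique (f := fun n => Φ^[n + 1] 0 t x) ?_
    ((hu t x).comp (tendsto_add_atTop_nat 1))⟩
  simp only [iterate_succ_apply']
  rw [tendsto_iff_norm_sub_tendsto_zero]
  refine squeeze_zero (fun _ => norm_nonneg _) (fun n => ?_)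
    (by simpa using ((tendsto_sum_nat_add d).const_mul K).mul_const t)
  simpa using hΦ _ _ (Iterate.rec P hP₀ hP n) hPu 0 _ (fun s _ y => by simpa using htail n s y)
    t ht x

end VolterraLipschitz

end Volterra

section Duhamel

variable {X : Type*} [MeasurableSpace X] {m : Measure X}
  {p : ℝ → X → X → ℝ} {f : ℝ → X → ℝ → ℝ} {w w' : ℝ → X → ℝ} {T Cf Kf t s : ℝ} {x : X}

noncomputable def duhamelIntegrand (m : Measure X) (p : ℝ → X → X → ℝ) (f : ℝ → X → ℝ → ℝ)
    (w : ℝ → X → ℝ) (t : ℝ) (x : X) (s : ℝ) : ℝ :=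
  ∫ y, p (t - s) x y * f s y (w s y) ∂m

noncomputable def duhamel (m : Measure X) (p : ℝ → X → X → ℝ) (f : ℝ → X → ℝ → ℝ) (w : ℝ → X → ℝ)
    (t : ℝ) (x : X) : ℝ :=
  ∫ s in Ioo 0 t, duhamelIntegrand m p f w t x s

lemma measurable_nemytskii (hf_meas : Measurable fun q : ℝ × X × ℝ => f q.1 q.2.1 q.2.2)
    (hw : Measurable (uncurry w)) : Measurable (uncurry fun s y => f s y (w s y)) :=
  hf_meas.comp (measurable_fst.prodMk (measurable_snd.prodMk hw))

lemma abs_duhamelIntegrand_le (hp_nonneg : ∀ t ∈ Ioc 0 T, ∀ x y, 0 ≤ p t x y)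
    (hp_one : ∀ t ∈ Ioc 0 T, ∀ x, ∫ y, p t x y ∂m = 1)
    (hf_bdd : ∀ s ∈ Icc 0 T, ∀ y r, |f s y r| ≤ Cf) (ht : t ≤ T) (hs : s ∈ Ioo 0 t) :
    |duhamelIntegrand m p f w t x s| ≤ Cf := by
  have hts : t - s ∈ Ioc 0 T := ⟨by linarith [hs.2], by linarith [hs.1]⟩
  exact abs_integral_mul_le (hp_nonneg _ hts x) (hp_one _ hts x)
    fun y => hf_bdd s ⟨hs.1.le, hs.2.le.trans ht⟩ y _

lemma aestronglyMeasurable_duhamelIntegrand [TopologicalSpace X] [OpensMeasurableSpace X]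
    [SFinite m]
    (hp_cont : ContinuousOn (fun q : ℝ × X × X => p q.1 q.2.1 q.2.2) (Ioc 0 T ×ˢ univ))
    (hf_meas : Measurable fun q : ℝ × X × ℝ => f q.1 q.2.1 q.2.2)
    (hw : Measurable (uncurry w)) (ht : t ≤ T) :
    AEStronglyMeasurable (duhamelIntegrand m p f w t x) (volume.restrict (Ioo 0 t)) := by
  have hp : ContinuousOn (fun z : ℝ × X => p (t - z.1) x z.2) (Ioo 0 t ×ˢ univ) :=
    hp_cont.comp (f := fun z : ℝ × X => (t - z.1, x, z.2)) (Continuous.continuousOn (by fun_prop))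
      fun z hz => ⟨⟨by linarith [hz.1.2], by linarith [hz.1.1]⟩, mem_univ _⟩
  have hp_meas : AEMeasurable (fun z : ℝ × X => p (t - z.1) x z.2)
      ((volume.restrict (Ioo 0 t)).prod m) := by
    simpa only [← Measure.prod_restrict, Measure.restrict_univ] using
      hp.aemeasurable (μ := volume.prod m) (measurableSet_Ioo.prod MeasurableSet.univ)
  exact ((hp_meas.mul (measurable_nemytskii hf_meas hw).aemeasurable).aestronglyMeasurable
    ).integral_prod_right'

lemma abs_duhamel_le (hp_nonneg : ∀ t ∈ Ioc 0 T, ∀ x y, 0 ≤ p t x y)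
    (hp_one : ∀ t ∈ Ioc 0 T, ∀ x, ∫ y, p t x y ∂m = 1)
    (hf_bdd : ∀ s ∈ Icc 0 T, ∀ y r, |f s y r| ≤ Cf) (ht : t ∈ Icc 0 T) :
    |duhamel m p f w t x| ≤ Cf * t := by
  have h := norm_setIntegral_le_of_norm_le_const (f := duhamelIntegrand m p f w t x)
    (measure_Ioo_lt_top (μ := volume)) fun s hs =>
      abs_duhamelIntegrand_le hp_nonneg hp_one hf_bdd ht.2 hs
  rwa [Real.volume_real_Ioo_of_le ht.1, sub_zero] at h

lemma abs_duhamel_sub_le [TopologicalSpace X] [OpensMeasurableSpace X] [SFinite m]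
    (hp_cont : ContinuousOn (fun q : ℝ × X × X => p q.1 q.2.1 q.2.2) (Ioc 0 T ×ˢ univ))
    (hp_nonneg : ∀ t ∈ Ioc 0 T, ∀ x y, 0 ≤ p t x y)
    (hp_one : ∀ t ∈ Ioc 0 T, ∀ x, ∫ y, p t x y ∂m = 1)
    (hf_meas : Measurable fun q : ℝ × X × ℝ => f q.1 q.2.1 q.2.2)
    (hf_bdd : ∀ s ∈ Icc 0 T, ∀ y r, |f s y r| ≤ Cf) (hKf : 0 ≤ Kf)
    (hf_lip : ∀ s ∈ Icc 0 T, ∀ y r₁ r₂, |f s y r₁ - f s y r₂| ≤ Kf * |r₁ - r₂|)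
    (hw : Measurable (uncurry w)) (hw' : Measurable (uncurry w')) {n : ℕ} {c : ℝ}
    (hc : ∀ s ∈ Icc 0 T, ∀ y, |w s y - w' s y| ≤ c * s ^ n) (ht : t ∈ Icc 0 T) :
    |duhamel m p f w t x - duhamel m p f w' t x| ≤ Kf * c * t ^ (n + 1) / (n + 1) := by
  have hint : ∀ w, Measurable (uncurry w) →
      IntegrableOn (duhamelIntegrand m p f w t x) (Ioo 0 t) := fun w hw =>
    Integrable.mono' (g := fun _ => Cf) (integrableOn_const measure_Ioo_lt_top.ne)
      (aestronglyMeasurable_duhamelIntegrand hp_cont hf_meas hw ht.2)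
      (ae_restrict_of_forall_mem measurableSet_Ioo fun s hs => (Real.norm_eq_abs _).trans_le
        (abs_duhamelIntegrand_le hp_nonneg hp_one hf_bdd ht.2 hs))
  have hinner : ∀ s ∈ Ioo 0 t,
      ‖duhamelIntegrand m p f w t x s - duhamelIntegrand m p f w' t x s‖ ≤ Kf * c * s ^ n := by
    intro s hs
    have hsT : s ∈ Icc 0 T := ⟨hs.1.le, hs.2.le.trans ht.2⟩
    have hts : t - s ∈ Ioc 0 T := ⟨by linarith [hs.2], by linarith [hs.1, ht.2]⟩
    have hslice : ∀ w, Measurable (uncurry w) → AEStronglyMeasurable (fun y => f s y (w s y)) m :=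
      fun _ hw => (measurable_nemytskii hf_meas hw).of_uncurry_left.aestronglyMeasurable
    rw [duhamelIntegrand, duhamelIntegrand, ← integral_sub
      (integrable_mul_of_abs_le (hp_one _ hts x) (hslice w hw) fun y => hf_bdd s hsT y _)
      (integrable_mul_of_abs_le (hp_one _ hts x) (hslice w' hw') fun y => hf_bdd s hsT y _)]
    simp_rw [← mul_sub]
    refine abs_integral_mul_le (hp_nonneg _ hts x) (hp_one _ hts x) fun y => ?_
    rw [mul_assoc]
    exact (hf_lip s hsT y _ _).trans (mul_le_mul_of_nonneg_left (hc s hsT y) hKf)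
  calc |duhamel m p f w t x - duhamel m p f w' t x|
      = ‖∫ s in Ioo 0 t, (duhamelIntegrand m p f w t x s - duhamelIntegrand m p f w' t x s)‖ := by
        rw [duhamel, duhamel, integral_sub (hint w hw) (hint w' hw'), Real.norm_eq_abs]
    _ ≤ ∫ s in Ioo 0 t, Kf * c * s ^ n :=
        norm_integral_le_of_norm_le
          ((continuous_const.mul (continuous_pow n)).integrableOn_Icc.mono_set Ioo_subset_Icc_self)
          (ae_restrict_of_forall_mem measurableSet_Ioo hinner)
    _ = Kf * c * t ^ (n + 1) / (n + 1) := by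
        rw [integral_const_mul, ← integral_Ioc_eq_integral_Ioo,
          ← intervalIntegral.integral_of_le ht.1, integral_pow]
        simp only [ne_eq, Nat.add_eq_zero_iff, one_ne_zero, and_false, not_false_eq_true,
          zero_pow, sub_zero]
        ring

lemma duhamel_eq_setIntegral_indicator (ht : t ≤ T) :
    duhamel m p f w t x = ∫ s in Ioo 0 T, (Iio t).indicator (duhamelIntegrand m p f w t x) s := by
  rw [setIntegral_indicator measurableSet_Iio, Ioo_inter_Iio, min_eq_right ht, duhamel]

end Duhamel

section Continuity

variable {X : Type*} [TopologicalSpace X] [FirstCountableTopology X] [MeasurableSpace X]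
  {m : Measure X} {p : ℝ → X → X → ℝ} {f : ℝ → X → ℝ → ℝ} {w : ℝ → X → ℝ} {T Cf : ℝ}

lemma continuousOn_integral_kernel_mul
    (hp_cont : ContinuousOn (fun q : ℝ × X × X => p q.1 q.2.1 q.2.2) (Ioc 0 T ×ˢ univ))
    (hp_nonneg : ∀ t ∈ Ioc 0 T, ∀ x y, 0 ≤ p t x y)
    (hp_one : ∀ t ∈ Ioc 0 T, ∀ x, ∫ y, p t x y ∂m = 1)
    {g : X → ℝ} {M : ℝ} (hg : AEStronglyMeasurable g m) (hgM : ∀ y, |g y| ≤ M) :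
    ContinuousOn (fun q : ℝ × X => ∫ y, p q.1 q.2 y * g y ∂m) (Ioc 0 T ×ˢ univ) := by
  rintro ⟨t, x⟩ ⟨ht, -⟩
  have hmem : ∀ᶠ q in 𝓝[Ioc 0 T ×ˢ univ] (t, x), q.1 ∈ Ioc 0 T :=
    eventually_mem_nhdsWithin.mono fun q hq => hq.1
  refine tendsto_integral_mul_of_tendsto (k := fun q y => p q.1 q.2 y)
    (hmem.mono fun q hq => hp_nonneg _ hq q.2) (hmem.mono fun q hq => hp_one _ hq q.2)
    (hp_nonneg t ht x) (hp_one t ht x) (fun y => ?_) hg hgM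
  have hy : ContinuousWithinAt (fun q : ℝ × X => (q.1, q.2, y)) (Ioc 0 T ×ˢ univ) (t, x) :=
    (by fun_prop : Continuous fun q : ℝ × X => (q.1, q.2, y)).continuousWithinAt
  exact ((hp_cont (t, x, y) ⟨ht, mem_univ _⟩).comp (f := fun q : ℝ × X => (q.1, q.2, y)) hy
    fun q (hq : q ∈ Ioc 0 T ×ˢ univ) => ⟨hq.1, mem_univ (q.2, y)⟩).tendsto

lemma tendsto_indicator_duhamelIntegrand
    (hp_cont : ContinuousOn (fun q : ℝ × X × X => p q.1 q.2.1 q.2.2) (Ioc 0 T ×ˢ univ))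
    (hp_nonneg : ∀ t ∈ Ioc 0 T, ∀ x y, 0 ≤ p t x y)
    (hp_one : ∀ t ∈ Ioc 0 T, ∀ x, ∫ y, p t x y ∂m = 1)
    (hf_meas : Measurable fun q : ℝ × X × ℝ => f q.1 q.2.1 q.2.2)
    (hf_bdd : ∀ s ∈ Icc 0 T, ∀ y r, |f s y r| ≤ Cf) (hw : Measurable (uncurry w))
    {t₀ s : ℝ} {x₀ : X} (ht₀ : t₀ ≤ T) (hs : s ∈ Ioo 0 T) (hst₀ : s ≠ t₀) :
    Tendsto (fun q : ℝ × X => (Iio q.1).indicator (duhamelIntegrand m p f w q.1 q.2) s)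
      (𝓝[Icc 0 T ×ˢ univ] (t₀, x₀))
      (𝓝 ((Iio t₀).indicator (duhamelIntegrand m p f w t₀ x₀) s)) := by
  have hfst : Tendsto (fun q : ℝ × X => q.1) (𝓝[Icc 0 T ×ˢ univ] (t₀, x₀)) (𝓝 t₀) :=
    continuous_fst.continuousWithinAt.tendsto
  rcases hst₀.lt_or_gt with hlt | hgt
  · have hlt' : ∀ᶠ q in 𝓝[Icc 0 T ×ˢ univ] (t₀, x₀), s < q.1 ∧ q.1 ≤ T :=
      (hfst.eventually_const_lt hlt).and (eventually_mem_nhdsWithin.mono fun q hq => hq.1.2)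
    have hkernel := continuousOn_integral_kernel_mul hp_cont hp_nonneg hp_one
      (measurable_nemytskii hf_meas hw).of_uncurry_left.aestronglyMeasurable
      (fun y => hf_bdd s ⟨hs.1.le, hs.2.le⟩ y (w s y)) (t₀ - s, x₀)
      ⟨⟨by linarith, by linarith [hs.1, hs.2]⟩, mem_univ _⟩
    have hshift : Tendsto (fun q : ℝ × X => (q.1 - s, q.2)) (𝓝[Icc 0 T ×ˢ univ] (t₀, x₀))
        (𝓝[Ioc 0 T ×ˢ univ] (t₀ - s, x₀)) :=
      tendsto_nhdsWithin_iff.2 ⟨(Continuous.continuousWithinAt (by fun_prop)).tendsto,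
        hlt'.mono fun q hq => ⟨⟨by linarith [hq.1], by linarith [hq.2, hs.1]⟩, mem_univ _⟩⟩
    rw [indicator_of_mem (mem_Iio.2 hlt)]
    refine (hkernel.tendsto.comp hshift).congr' (hlt'.mono fun q hq => ?_)
    exact (indicator_of_mem (mem_Iio.2 hq.1) (duhamelIntegrand m p f w q.1 q.2)).symm
  · rw [indicator_of_notMem (notMem_Iio.2 hgt.le)]
    refine tendsto_const_nhds.congr' ((hfst.eventually_lt_const hgt).mono fun q hq => ?_)
    exact (indicator_of_notMem (notMem_Iio.2 hq.le) _).symm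

lemma continuousOn_duhamel [OpensMeasurableSpace X] [SFinite m]
    (hp_cont : ContinuousOn (fun q : ℝ × X × X => p q.1 q.2.1 q.2.2) (Ioc 0 T ×ˢ univ))
    (hp_nonneg : ∀ t ∈ Ioc 0 T, ∀ x y, 0 ≤ p t x y)
    (hp_one : ∀ t ∈ Ioc 0 T, ∀ x, ∫ y, p t x y ∂m = 1)
    (hf_meas : Measurable fun q : ℝ × X × ℝ => f q.1 q.2.1 q.2.2)
    (hf_bdd : ∀ s ∈ Icc 0 T, ∀ y r, |f s y r| ≤ Cf) (hw : Measurable (uncurry w)) :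
    ContinuousOn (fun q : ℝ × X => duhamel m p f w q.1 q.2) (Icc 0 T ×ˢ univ) := by
  rintro ⟨t₀, x₀⟩ ⟨ht₀, -⟩
  have hmem : ∀ᶠ q in 𝓝[Icc 0 T ×ˢ univ] (t₀, x₀), q.1 ∈ Icc 0 T :=
    eventually_mem_nhdsWithin.mono fun q hq => hq.1
  show Tendsto (fun q : ℝ × X => duhamel m p f w q.1 q.2) _ (𝓝 (duhamel m p f w t₀ x₀))
  rw [duhamel_eq_setIntegral_indicator ht₀.2]
  refine Tendsto.congr' (hmem.mono fun q hq => (duhamel_eq_setIntegral_indicator hq.2).symm) ?_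
  refine tendsto_integral_filter_of_dominated_convergence (fun _ => Cf) ?_ ?_
    (integrableOn_const measure_Ioo_lt_top.ne) ?_
  · filter_upwards [hmem] with q hq
    rw [aestronglyMeasurable_indicator_iff measurableSet_Iio,
      Measure.restrict_restrict measurableSet_Iio, Iio_inter_Ioo, min_eq_left hq.2]
    exact aestronglyMeasurable_duhamelIntegrand hp_cont hf_meas hw hq.2
  · filter_upwards [hmem] with q hq
    refine ae_restrict_of_forall_mem measurableSet_Ioo fun s hs => ?_
    by_cases hsq : s < q.1
    · rw [indicator_of_mem (mem_Iio.2 hsq)]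
      exact abs_duhamelIntegrand_le hp_nonneg hp_one hf_bdd hq.2 ⟨hs.1, hsq⟩
    · rw [indicator_of_notMem (mt mem_Iio.1 hsq), norm_zero]
      exact (abs_nonneg _).trans (hf_bdd s ⟨hs.1.le, hs.2.le⟩ x₀ 0)
  · filter_upwards [ae_restrict_mem measurableSet_Ioo, Measure.ae_ne _ t₀] with s hs hst₀
    exact tendsto_indicator_duhamelIntegrand hp_cont hp_nonneg hp_one hf_meas hf_bdd hw ht₀.2 hs
      hst₀

end Continuity

section PicardMap

variable {X : Type*} [MeasurableSpace X] {m : Measure X} {p : ℝ → X → X → ℝ}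
  {f : ℝ → X → ℝ → ℝ} {v w : ℝ → X → ℝ} {T Cf Kf : ℝ}

/-- The right-hand side of the integral equation, cut off outside the strip `[0, T] × X` so that
it is globally measurable although `v` is only controlled on the strip. -/
noncomputable def picardMap (m : Measure X) (p : ℝ → X → X → ℝ) (f : ℝ → X → ℝ → ℝ)
    (v : ℝ → X → ℝ) (T : ℝ) (w : ℝ → X → ℝ) (t : ℝ) (x : X) : ℝ :=
  if t ∈ Icc 0 T then v t x + duhamel m p f w t x else 0

lemma picardMap_of_mem {t : ℝ} {x : X} (ht : t ∈ Icc 0 T) :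
    picardMap m p f v T w t x = v t x + duhamel m p f w t x :=
  if_pos ht

lemma picardMap_of_notMem {t : ℝ} {x : X} (ht : t ∉ Icc 0 T) : picardMap m p f v T w t x = 0 :=
  if_neg ht

lemma abs_picardMap_le (hp_nonneg : ∀ t ∈ Ioc 0 T, ∀ x y, 0 ≤ p t x y)
    (hp_one : ∀ t ∈ Ioc 0 T, ∀ x, ∫ y, p t x y ∂m = 1)
    (hf_bdd : ∀ s ∈ Icc 0 T, ∀ y r, |f s y r| ≤ Cf) (hCf : 0 ≤ Cf) {Cv : ℝ}
    (hv_bdd : ∀ t ∈ Icc 0 T, ∀ x, |v t x| ≤ Cv) {t : ℝ} (ht : t ∈ Icc 0 T) (x : X) :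
    |picardMap m p f v T w t x| ≤ Cv + Cf * T := by
  rw [picardMap_of_mem ht]
  refine (abs_add_le _ _).trans (add_le_add (hv_bdd t ht x) ?_)
  exact (abs_duhamel_le hp_nonneg hp_one hf_bdd ht).trans (mul_le_mul_of_nonneg_left ht.2 hCf)

variable [TopologicalSpace X] [OpensMeasurableSpace X] [SFinite m]

lemma measurable_picardMap [FirstCountableTopology X]
    (hp_cont : ContinuousOn (fun q : ℝ × X × X => p q.1 q.2.1 q.2.2) (Ioc 0 T ×ˢ univ))
    (hp_nonneg : ∀ t ∈ Ioc 0 T, ∀ x y, 0 ≤ p t x y)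
    (hp_one : ∀ t ∈ Ioc 0 T, ∀ x, ∫ y, p t x y ∂m = 1)
    (hf_meas : Measurable fun q : ℝ × X × ℝ => f q.1 q.2.1 q.2.2)
    (hf_bdd : ∀ s ∈ Icc 0 T, ∀ y r, |f s y r| ≤ Cf)
    (hv_cont : ContinuousOn (fun q : ℝ × X => v q.1 q.2) (Icc 0 T ×ˢ univ))
    (hw : Measurable (uncurry w)) : Measurable (uncurry (picardMap m p f v T w)) := by
  classical
  convert (hv_cont.add (continuousOn_duhamel hp_cont hp_nonneg hp_one hf_meas hf_bdd hw)
    ).measurable_piecewise (continuousOn_const (c := 0))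
    (measurableSet_Icc.prod MeasurableSet.univ) using 1
  ext ⟨t, x⟩
  simp [picardMap, Set.piecewise]

lemma volterraLipschitz_picardMap
    (hp_cont : ContinuousOn (fun q : ℝ × X × X => p q.1 q.2.1 q.2.2) (Ioc 0 T ×ˢ univ))
    (hp_nonneg : ∀ t ∈ Ioc 0 T, ∀ x y, 0 ≤ p t x y)
    (hp_one : ∀ t ∈ Ioc 0 T, ∀ x, ∫ y, p t x y ∂m = 1)
    (hf_meas : Measurable fun q : ℝ × X × ℝ => f q.1 q.2.1 q.2.2)
    (hf_bdd : ∀ s ∈ Icc 0 T, ∀ y r, |f s y r| ≤ Cf) (hKf : 0 ≤ Kf)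
    (hf_lip : ∀ s ∈ Icc 0 T, ∀ y r₁ r₂, |f s y r₁ - f s y r₂| ≤ Kf * |r₁ - r₂|) :
    VolterraLipschitz T Kf (fun w => Measurable (uncurry w)) (picardMap m p f v T) := by
  intro w w' hw hw' n c hc t ht x
  rw [picardMap_of_mem ht, picardMap_of_mem ht, add_sub_add_left_eq_sub]
  exact abs_duhamel_sub_le hp_cont hp_nonneg hp_one hf_meas hf_bdd hKf hf_lip hw hw' hc ht

end PicardMap

theorem statement12_general
    {X : Type*} [MetricSpace X] [MeasurableSpace X] [BorelSpace X]
    (m : Measure X) [SigmaFinite m]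
    (T : ℝ)
    (p : ℝ → X → X → ℝ)
    (hp_cont : ContinuousOn (fun q : ℝ × X × X => p q.1 q.2.1 q.2.2)
      (Set.Ioc (0 : ℝ) T ×ˢ (Set.univ : Set (X × X))))
    (hp_nonneg : ∀ t ∈ Set.Ioc (0 : ℝ) T, ∀ x y : X, 0 ≤ p t x y)
    (hp_one : ∀ t ∈ Set.Ioc (0 : ℝ) T, ∀ x : X, ∫ y, p t x y ∂m = 1)
    (f : ℝ → X → ℝ → ℝ)
    (hf_meas : Measurable fun q : ℝ × X × ℝ => f q.1 q.2.1 q.2.2)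
    (Cf Kf : ℝ) (hCf : 0 < Cf) (hKf : 0 < Kf)
    (hf_bdd : ∀ s ∈ Set.Icc (0 : ℝ) T, ∀ (y : X) (r : ℝ), |f s y r| ≤ Cf)
    (hf_lip : ∀ s ∈ Set.Icc (0 : ℝ) T, ∀ (y₁ y₂ : X) (r₁ r₂ : ℝ),
      |f s y₁ r₁ - f s y₂ r₂| ≤ Kf * (dist y₁ y₂ + |r₁ - r₂|))
    (v : ℝ → X → ℝ)
    (hv_cont : ContinuousOn (fun q : ℝ × X => v q.1 q.2)
      (Set.Icc (0 : ℝ) T ×ˢ (Set.univ : Set X)))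
    (Cv : ℝ) (hv_bdd : ∀ t ∈ Set.Icc (0 : ℝ) T, ∀ x : X, |v t x| ≤ Cv) :
    ∃ u : ℝ → X → ℝ,
      ((Measurable fun q : ℝ × X => u q.1 q.2) ∧
        (∃ Cu : ℝ, ∀ t ∈ Set.Icc (0 : ℝ) T, ∀ x : X, |u t x| ≤ Cu) ∧
        (∀ t ∈ Set.Icc (0 : ℝ) T, ∀ x : X,
          u t x = v t x
            + ∫ s in Set.Ioo (0 : ℝ) t, ∫ y, p (t - s) x y * f s y (u s y) ∂m) ∧
        ContinuousOn (fun q : ℝ × X => u q.1 q.2)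
          (Set.Icc (0 : ℝ) T ×ˢ (Set.univ : Set X))) ∧
      ∀ u' : ℝ → X → ℝ,
        (Measurable fun q : ℝ × X => u' q.1 q.2) →
        (∃ Cu : ℝ, ∀ t ∈ Set.Icc (0 : ℝ) T, ∀ x : X, |u' t x| ≤ Cu) →
        (∀ t ∈ Set.Icc (0 : ℝ) T, ∀ x : X,
          u' t x = v t x
            + ∫ s in Set.Ioo (0 : ℝ) t, ∫ y, p (t - s) x y * f s y (u' s y) ∂m) →
        ∀ t ∈ Set.Icc (0 : ℝ) T, ∀ x : X, u' t x = u t x := by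
  have hf_lip' : ∀ s ∈ Icc 0 T, ∀ (y : X) (r₁ r₂ : ℝ), |f s y r₁ - f s y r₂| ≤ Kf * |r₁ - r₂| :=
    fun s hs y r₁ r₂ => by simpa using hf_lip s hs y y r₁ r₂
  have hΦ := volterraLipschitz_picardMap (v := v) hp_cont hp_nonneg hp_one hf_meas hf_bdd hKf.le
    hf_lip'
  have hΦ_bdd : ∀ w, ∀ t ∈ Icc 0 T, ∀ x, |picardMap m p f v T w t x| ≤ Cv + Cf * T :=
    fun _ _ ht x => abs_picardMap_le hp_nonneg hp_one hf_bdd hCf.le hv_bdd ht x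
  obtain ⟨u, hu, hu_fix⟩ := hΦ.exists_isFixedPt hKf.le measurable_const
    (fun _ hw => measurable_picardMap hp_cont hp_nonneg hp_one hf_meas hf_bdd hv_cont hw)
    (fun _ _ hU hlim => measurable_of_tendsto_metrizable' atTop hU <| tendsto_pi_nhds.2 fun q =>
      tendsto_pi_nhds.1 (tendsto_pi_nhds.1 hlim q.1) q.2)
    (fun _ _ _ ht => picardMap_of_notMem ht) ⟨_, hΦ_bdd 0⟩
  have hu_eq : ∀ t ∈ Icc 0 T, ∀ x, u t x = v t x + duhamel m p f u t x :=
    fun t ht x => (hu_fix t ht x).symm.trans (picardMap_of_mem ht)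
  refine ⟨u, ⟨hu, ⟨_, fun t ht x => hu_fix t ht x ▸ hΦ_bdd u t ht x⟩, hu_eq, ?_⟩, ?_⟩
  · exact (hv_cont.add (continuousOn_duhamel hp_cont hp_nonneg hp_one hf_meas hf_bdd hu)).congr
      fun q hq => hu_eq q.1 hq.1 q.2
  · intro u' hu' hu'_bdd hu'_eq
    exact hΦ.eqOn_of_isFixedPt hu' hu hu'_bdd ⟨_, fun t ht x => hu_fix t ht x ▸ hΦ_bdd u t ht x⟩
      (fun t ht x => (picardMap_of_mem ht).trans (hu'_eq t ht x).symm) hu_fix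

/-- Context: `(X,d)` a metric space with a σ-finite Borel measure `m` satisfying
`m(B(x,r)) ≤ C_m r^{d_f}` (`C_m, d_f > 0`); `d_w > d_f`, `d_J > 1`,
`d_s = 2 d_f / d_w` with `d_s/2 < 1`; `T > 0`; `p : (0,T] × X × X → [0,∞)` jointly
continuous with `∫_X p(t,x,y) dm(y) = 1` and satisfying
(i) `|p(t,x,y₁) − p(t,x,y₂)| ≤ c₁ t⁻¹ d(y₁,y₂)^{d_w − d_f}` and
(ii) `p(t,x,y) ≤ c₂ t^{−d_s/2} exp(−c₃ (d(x,y)^{d_w}/t)^{1/(d_J−1)})`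
(`c₁, c₂, c₃ > 0`); `f : [0,T] × X × ℝ → ℝ` measurable with `|f| ≤ C_f` and
`|f(s,y₁,r₁) − f(s,y₂,r₂)| ≤ K_f (d(y₁,y₂) + |r₁ − r₂|)` (`C_f, K_f > 0`);
`v : [0,T] × X → ℝ` bounded and continuous.

Claim: there exists a unique bounded measurable `u : [0,T] × X → ℝ` with
`u(t,x) = v(t,x) + ∫₀ᵗ (∫_X p(t−s,x,y) f(s,y,u(s,y)) dm(y)) ds` for all
`(t,x) ∈ [0,T] × X`, and this `u` is continuous on `[0,T] × X`. -/
theorem statement12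
    {X : Type*} [MetricSpace X] [MeasurableSpace X] [BorelSpace X]
    (m : Measure X) [SigmaFinite m]
    (Cm df dw dJ ds T : ℝ)
    (hCm : 0 < Cm) (hdf : 0 < df) (hdw : df < dw) (hdJ : 1 < dJ)
    (hds : ds = 2 * df / dw) (hds2 : ds / 2 < 1) (hT : 0 < T)
    (hball : ∀ (x : X) (r : ℝ), 0 < r →
      m (Metric.closedBall x r) ≤ ENNReal.ofReal (Cm * r ^ df))
    (p : ℝ → X → X → ℝ)
    (hp_cont : ContinuousOn (fun q : ℝ × X × X => p q.1 q.2.1 q.2.2)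
      (Set.Ioc (0 : ℝ) T ×ˢ (Set.univ : Set (X × X))))
    (hp_nonneg : ∀ t ∈ Set.Ioc (0 : ℝ) T, ∀ x y : X, 0 ≤ p t x y)
    (hp_one : ∀ t ∈ Set.Ioc (0 : ℝ) T, ∀ x : X, ∫ y, p t x y ∂m = 1)
    (c₁ c₂ c₃ : ℝ) (hc₁ : 0 < c₁) (hc₂ : 0 < c₂) (hc₃ : 0 < c₃)
    (hp_hold : ∀ t ∈ Set.Ioc (0 : ℝ) T, ∀ x y₁ y₂ : X,
      |p t x y₁ - p t x y₂| ≤ c₁ * t⁻¹ * dist y₁ y₂ ^ (dw - df))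
    (hp_ub : ∀ t ∈ Set.Ioc (0 : ℝ) T, ∀ x y : X,
      p t x y ≤ c₂ * t ^ (-ds / 2) *
        Real.exp (-c₃ * (dist x y ^ dw / t) ^ (1 / (dJ - 1))))
    (f : ℝ → X → ℝ → ℝ)
    (hf_meas : Measurable fun q : ℝ × X × ℝ => f q.1 q.2.1 q.2.2)
    (Cf Kf : ℝ) (hCf : 0 < Cf) (hKf : 0 < Kf)
    (hf_bdd : ∀ s ∈ Set.Icc (0 : ℝ) T, ∀ (y : X) (r : ℝ), |f s y r| ≤ Cf)
    (hf_lip : ∀ s ∈ Set.Icc (0 : ℝ) T, ∀ (y₁ y₂ : X) (r₁ r₂ : ℝ),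
      |f s y₁ r₁ - f s y₂ r₂| ≤ Kf * (dist y₁ y₂ + |r₁ - r₂|))
    (v : ℝ → X → ℝ)
    (hv_cont : ContinuousOn (fun q : ℝ × X => v q.1 q.2)
      (Set.Icc (0 : ℝ) T ×ˢ (Set.univ : Set X)))
    (Cv : ℝ) (hv_bdd : ∀ t ∈ Set.Icc (0 : ℝ) T, ∀ x : X, |v t x| ≤ Cv) :
    ∃ u : ℝ → X → ℝ,
      ((Measurable fun q : ℝ × X => u q.1 q.2) ∧
        (∃ Cu : ℝ, ∀ t ∈ Set.Icc (0 : ℝ) T, ∀ x : X, |u t x| ≤ Cu) ∧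
        (∀ t ∈ Set.Icc (0 : ℝ) T, ∀ x : X,
          u t x = v t x
            + ∫ s in Set.Ioo (0 : ℝ) t, ∫ y, p (t - s) x y * f s y (u s y) ∂m) ∧
        ContinuousOn (fun q : ℝ × X => u q.1 q.2)
          (Set.Icc (0 : ℝ) T ×ˢ (Set.univ : Set X))) ∧
      ∀ u' : ℝ → X → ℝ,
        (Measurable fun q : ℝ × X => u' q.1 q.2) →
        (∃ Cu : ℝ, ∀ t ∈ Set.Icc (0 : ℝ) T, ∀ x : X, |u' t x| ≤ Cu) →
        (∀ t ∈ Set.Icc (0 : ℝ) T, ∀ x : X,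
          u' t x = v t x
            + ∫ s in Set.Ioo (0 : ℝ) t, ∫ y, p (t - s) x y * f s y (u' s y) ∂m) →
        ∀ t ∈ Set.Icc (0 : ℝ) T, ∀ x : X, u' t x = u t x :=
  statement12_general m T p hp_cont hp_nonneg hp_one f hf_meas Cf Kf hCf hKf hf_bdd hf_lip v hv_cont
    Cv hv_bdd
end
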